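/- arXiv:1907.01547 — 7 statements merged into one kernel-verified Lean document; each statement's English description precedes it below -/
import Mathlib

section
/- Let K be a field, n ∈ ℕ, and X ⊆ K^n a finite set. With d := |X|, the ideal of S = K[X_1,…,X_n] generated by I_{≤d}(X) equals the vanishing ideal I(X). -/
open MvPolynomial

section Aux

variable {K : Type*} [Field K] {n : ℕ}

lemma aux_sub_C_eval_mem (a : Fin n → K) (p : MvPolynomial (Fin n) K) :
    p - C (eval a p) ∈
      Ideal.span (Set.range fun i => (X i : MvPolynomial (Fin n) K) - C (a i)) := by
  induction p using MvPolynomial.induction_on with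
  | C c => simp
  | add p q hp hq =>
      have h := Ideal.add_mem _ hp hq
      have : p + q - C (eval a (p + q)) =
          (p - C (eval a p)) + (q - C (eval a q)) := by
        rw [map_add, C_add]; ring
      rw [this]; exact h
  | mul_X p i hp =>
      have h1 : p * X i - C (eval a (p * X i))
          = (p - C (eval a p)) * C (a i) + p * (X i - C (a i)) := by
        rw [map_mul, eval_X, C_mul]; ring
      rw [h1]
      exact Ideal.add_mem _ (Ideal.mul_mem_right _ _ hp)
        (Ideal.mul_mem_left _ _ (Ideal.subset_span ⟨i, rfl⟩))

lemma aux_eval_zero_mem {a : Fin n → K} {p : MvPolynomial (Fin n) K}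
    (h : eval a p = 0) :
    p ∈ Ideal.span (Set.range fun i => (X i : MvPolynomial (Fin n) K) - C (a i)) := by
  have := aux_sub_C_eval_mem a p
  rwa [h, map_zero, sub_zero] at this

lemma aux_key (S : Finset (Fin n → K)) :
    vanishingIdeal K (S : Set (Fin n → K)) ≤
      Ideal.span {p : MvPolynomial (Fin n) K |
        p.totalDegree ≤ S.card ∧ ∀ x ∈ S, eval x p = 0} := by
  classical
  induction S using Finset.induction_on with
  | empty =>
      intro p _
      have h1 : (1 : MvPolynomial (Fin n) K) ∈
          {p : MvPolynomial (Fin n) K |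
            p.totalDegree ≤ (∅ : Finset (Fin n → K)).card ∧ ∀ x ∈ (∅ : Finset (Fin n → K)), eval x p = 0} := by
        constructor
        · simp
        · intro x hx; simp at hx
      simpa using Ideal.mul_mem_left _ p (Ideal.subset_span h1)
  | @insert a s ha ih =>
      intro p hpv
      set G : Set (MvPolynomial (Fin n) K) :=
        {q | q.totalDegree ≤ (insert a s).card ∧ ∀ x ∈ insert a s, eval x q = 0} with hG
      set J : Ideal (MvPolynomial (Fin n) K) := Ideal.span G with hJ
      show p ∈ J
      -- choose separating coordinates
      have hsep : ∀ x : {x // x ∈ s}, ∃ i, x.1 i ≠ a i := by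
        rintro ⟨x, hx⟩
        by_contra h
        push_neg at h
        exact ha (by rwa [show x = a from funext h] at hx)
      choose f hf using hsep
      set L : MvPolynomial (Fin n) K :=
        ∏ x ∈ s.attach, (X (f x) - C (x.1 (f x))) with hL
      have hdeg1 : ∀ x : {x // x ∈ s},
          (X (f x) - C (x.1 (f x)) : MvPolynomial (Fin n) K).totalDegree ≤ 1 := by
        intro x
        refine le_trans (totalDegree_sub_C_le _ _) ?_
        simp [totalDegree_X]
      have hLdeg : L.totalDegree ≤ s.card := by
        refine le_trans (totalDegree_finset_prod _ _) ?_
        calc ∑ x ∈ s.attach, (X (f x) - C (x.1 (f x)) : MvPolynomial (Fin n) K).totalDegree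
            ≤ ∑ _x ∈ s.attach, 1 := Finset.sum_le_sum fun x _ => hdeg1 x
          _ = s.card := by simp
      have hLvanish : ∀ x ∈ s, eval x L = 0 := by
        intro x hx
        rw [hL, map_prod]
        exact Finset.prod_eq_zero (Finset.mem_attach s ⟨x, hx⟩) (by simp)
      have hc : eval a L ≠ 0 := by
        rw [hL, map_prod]
        rw [Finset.prod_ne_zero_iff]
        intro x _
        simpa [sub_ne_zero] using (hf x).symm
      set c : K := eval a L with hcdef
      -- every element of J vanishes at a
      have hJa : J ≤ vanishingIdeal K {a} := by
        rw [hJ]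
        refine Ideal.span_le.mpr ?_
        intro q hq
        rw [SetLike.mem_coe, mem_vanishingIdeal_singleton_iff]
        exact hq.2 a (Finset.mem_insert_self a s)
      -- modified generators and linear multiples of L belong to G
      have hmod : ∀ g ∈ {q : MvPolynomial (Fin n) K |
          q.totalDegree ≤ s.card ∧ ∀ x ∈ s, eval x q = 0},
          g - C (eval a g / c) * L ∈ G := by
        intro g hg
        constructor
        · refine le_trans (totalDegree_sub _ _) ?_
          refine max_le (le_trans hg.1 ?_) ?_
          · simp [Finset.card_insert_of_notMem ha]
          · refine le_trans (totalDegree_mul _ _) ?_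
            calc (C (eval a g / c) : MvPolynomial (Fin n) K).totalDegree + L.totalDegree
                ≤ 0 + s.card := add_le_add (totalDegree_C _).le hLdeg
              _ ≤ (insert a s).card := by simp [Finset.card_insert_of_notMem ha]
        · intro x hx
          rcases Finset.mem_insert.mp hx with rfl | hxs
          · have hc' := hc
            rw [hcdef] at hc'
            simp [hcdef, div_mul_cancel₀ _ hc']
          · simp [hg.2 x hxs, hLvanish x hxs]
      have hlin : ∀ i : Fin n, ((X i : MvPolynomial (Fin n) K) - C (a i)) * L ∈ G := by
        intro i
        constructor
        · refine le_trans (totalDegree_mul _ _) ?_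
          have : ((X i : MvPolynomial (Fin n) K) - C (a i)).totalDegree ≤ 1 := by
            refine le_trans (totalDegree_sub_C_le _ _) ?_
            simp [totalDegree_X]
          calc ((X i : MvPolynomial (Fin n) K) - C (a i)).totalDegree + L.totalDegree
              ≤ 1 + s.card := add_le_add this hLdeg
            _ = (insert a s).card := by
                rw [Finset.card_insert_of_notMem ha]; ring
        · intro x hx
          rcases Finset.mem_insert.mp hx with rfl | hxs
          · simp
          · simp [hLvanish x hxs]
      -- p belongs to span of (s-generators), hence to J ⊔ span {L}
      have hps : p ∈ Ideal.span {q : MvPolynomial (Fin n) K |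
          q.totalDegree ≤ s.card ∧ ∀ x ∈ s, eval x q = 0} := by
        apply ih
        intro x hx
        exact hpv x (by simp [hx])
      have hsub : Ideal.span {q : MvPolynomial (Fin n) K |
          q.totalDegree ≤ s.card ∧ ∀ x ∈ s, eval x q = 0} ≤ J ⊔ Ideal.span {L} := by
        refine Ideal.span_le.mpr ?_
        intro g hg
        have : g = (g - C (eval a g / c) * L) + C (eval a g / c) * L := by ring
        rw [SetLike.mem_coe, this]
        exact Ideal.add_mem _
          (Ideal.mem_sup_left (Ideal.subset_span (hmod g hg)))
          (Ideal.mem_sup_right (Ideal.mul_mem_left _ _ (Ideal.subset_span rfl)))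
      have hp2 := hsub hps
      rw [Submodule.mem_sup] at hp2
      obtain ⟨j, hj, z, hz, hjz⟩ := hp2
      obtain ⟨r, hr⟩ := Ideal.mem_span_singleton'.mp hz
      -- eval a r = 0
      have heva : eval a p = 0 := hpv a (by simp)
      have hevj : eval a j = 0 := by
        have := hJa hj
        rwa [mem_vanishingIdeal_singleton_iff] at this
      have hevr : eval a r = 0 := by
        have : eval a r * c = 0 := by
          have h1 : eval a (r * L) = eval a p - eval a j := by
            rw [← hjz, ← hr, map_add]; ring
          rw [map_mul] at h1
          rw [h1, heva, hevj, sub_zero]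
        exact (mul_eq_zero.mp this).resolve_right hc
      have hrmem := aux_eval_zero_mem hevr
      -- r * L ∈ J
      have hrL : r * L ∈ J := by
        refine Submodule.span_induction ?_ ?_ ?_ ?_ hrmem
        · rintro t ⟨i, rfl⟩
          exact Ideal.subset_span (hlin i)
        · simp
        · intro u v _ _ hu hv
          have : (u + v) * L = u * L + v * L := by ring
          rw [this]; exact Ideal.add_mem _ hu hv
        · intro q u _ hu
          have : (q • u) * L = q * (u * L) := by
            rw [smul_eq_mul]; ring
          rw [this]; exact Ideal.mul_mem_left _ _ hu
      rw [← hjz, ← hr]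
      exact Ideal.add_mem _ hj hrL

end Aux

/-- For a finite set `X ⊆ K^n` and `d := |X|`, the ideal of
`S = K[X_1,…,X_n]` generated by the vanishing space `I_{≤d}(X)` equals the
vanishing ideal `I(X)`. -/
theorem stmt3 (K : Type*) [Field K] (n : ℕ) (X : Finset (Fin n → K)) :
    Ideal.span {p : MvPolynomial (Fin n) K |
        p.totalDegree ≤ X.card ∧ ∀ x ∈ X, MvPolynomial.eval x p = 0}
      = MvPolynomial.vanishingIdeal K (X : Set (Fin n → K)) := by
  refine le_antisymm ?_ (aux_key X)
  refine Ideal.span_le.mpr ?_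
  intro q hq
  rw [SetLike.mem_coe, mem_vanishingIdeal_iff]
  intro x hx
  exact hq.2 x (by exact_mod_cast hx)
end

section
/- Let K be an infinite field and n ≥ 1. Then for every d ∈ ℕ there exists a subset X ⊆ K^n with |X| = d + 1 such that the ideal of S = K[X_1,…,X_n] generated by I_{≤d}(X) is strictly contained in the vanishing ideal I(X). -/
/-- Over an infinite field `K` and for `n ≥ 1`, for every `d ∈ ℕ` there
exists a subset `X ⊆ K^n` with `|X| = d + 1` such that the ideal generated by the
vanishing space `I_{≤d}(X)` is strictly contained in the vanishing ideal `I(X)`. -/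
theorem stmt4 (K : Type*) [Field K] [Infinite K] (n : ℕ) (hn : 1 ≤ n) (d : ℕ) :
    ∃ X : Finset (Fin n → K), X.card = d + 1 ∧
      Ideal.span {p : MvPolynomial (Fin n) K |
          p.totalDegree ≤ d ∧ ∀ x ∈ X, MvPolynomial.eval x p = 0}
        < MvPolynomial.vanishingIdeal K (X : Set (Fin n → K)) := by
  classical
  set z : Fin n := ⟨0, hn⟩ with hz
  set c : Fin (d + 1) → K := fun i => Infinite.natEmbedding K i.val with hc
  have hcinj : Function.Injective c := by
    intro i j h
    have := (Infinite.natEmbedding K).injective h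
    exact Fin.ext this
  set line : K → (Fin n → K) := fun t j => if j = z then t else 0 with hline
  have hlineinj : Function.Injective line := by
    intro s t h
    have := congrFun h z
    simpa [hline] using this
  set X : Finset (Fin n → K) := Finset.image (fun i => line (c i)) Finset.univ with hX
  have hmemX : ∀ i : Fin (d + 1), line (c i) ∈ X := by
    intro i; simp [hX]
  -- the substitution homomorphism onto the line
  set φ : MvPolynomial (Fin n) K →ₐ[K] Polynomial K :=
    MvPolynomial.aeval (fun j => if j = z then Polynomial.X else 0) with hφ
  have keyeval : ∀ (t : K) (p : MvPolynomial (Fin n) K),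
      Polynomial.eval t (φ p) = MvPolynomial.eval (line t) p := by
    intro t p
    have : (Polynomial.aeval t).comp φ = MvPolynomial.aeval (line t) := by
      apply MvPolynomial.algHom_ext
      intro j
      by_cases h : j = z <;> simp [hφ, hline, h]
    have h2 := congrFun (congrArg DFunLike.coe this) p
    rw [show ((MvPolynomial.eval (line t)) p : K) = MvPolynomial.aeval (line t) p by
      rw [MvPolynomial.aeval_def, MvPolynomial.eval]; rfl]
    simpa using h2
  -- every generator vanishes on the whole line
  have hgen : ∀ p ∈ {p : MvPolynomial (Fin n) K |
      p.totalDegree ≤ d ∧ ∀ x ∈ X, MvPolynomial.eval x p = 0},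
      ∀ t : K, MvPolynomial.eval (line t) p = 0 := by
    rintro p ⟨hdeg, hvan⟩ t
    have hdφ : (φ p).natDegree ≤ d := by
      have := MvPolynomial.aeval_natDegree_le (n := 1) p hdeg
        (fun j => if j = z then Polynomial.X else 0)
        (fun j => by by_cases h : j = z <;> simp [h])
      simpa using this
    have hzero : φ p = 0 := by
      apply Polynomial.eq_zero_of_natDegree_lt_card_of_eval_eq_zero (φ p) hcinj
      · intro i
        rw [keyeval]
        exact hvan _ (hmemX i)
      · simpa using Nat.lt_succ_of_le hdφ
    rw [← keyeval, hzero, Polynomial.eval_zero]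
  refine ⟨X, ?_, ?_⟩
  · rw [hX, Finset.card_image_of_injective _ (fun a b h => hcinj (hlineinj h))]
    simp
  · rw [lt_iff_le_not_ge]
    constructor
    · refine Ideal.span_le.mpr ?_
      rintro p ⟨_, hvan⟩
      exact MvPolynomial.mem_vanishingIdeal_iff.2 hvan
    · intro hle
      -- the witness polynomial
      set q : MvPolynomial (Fin n) K :=
        ∏ i : Fin (d + 1), (MvPolynomial.X z - MvPolynomial.C (c i)) with hq
      have hqX : q ∈ MvPolynomial.vanishingIdeal K (X : Set (Fin n → K)) := by
        apply MvPolynomial.mem_vanishingIdeal_iff.2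
        intro x hx
        simp only [hX, Finset.coe_image, Set.mem_image] at hx
        obtain ⟨i, -, rfl⟩ := hx
        rw [hq, map_prod]
        apply Finset.prod_eq_zero (Finset.mem_univ i)
        simp [hline]
      have hqspan := hle hqX
      -- the span is contained in the vanishing ideal of the line
      have hspanline : Ideal.span {p : MvPolynomial (Fin n) K |
          p.totalDegree ≤ d ∧ ∀ x ∈ X, MvPolynomial.eval x p = 0}
          ≤ MvPolynomial.vanishingIdeal K (Set.range line) := by
        rw [Ideal.span_le]
        intro p hp
        apply MvPolynomial.mem_vanishingIdeal_iff.2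
        rintro x ⟨t, rfl⟩
        exact hgen p hp t
      have hqline := hspanline hqspan
      obtain ⟨t, ht⟩ := Infinite.exists_notMem_finset (Finset.image c Finset.univ)
      have ht' : ∀ i, t ≠ c i := by
        intro i h
        exact ht (Finset.mem_image.2 ⟨i, Finset.mem_univ i, h.symm⟩)
      have := MvPolynomial.mem_vanishingIdeal_iff.1 hqline (line t) ⟨t, rfl⟩
      rw [hq, map_prod] at this
      have hne : ∀ i : Fin (d+1),
          MvPolynomial.eval (line t) (MvPolynomial.X z - MvPolynomial.C (c i)) ≠ 0 := by
        intro i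
        simp only [map_sub, MvPolynomial.eval_X, MvPolynomial.eval_C]
        have : line t z = t := by simp [hline]
        rw [this]
        exact sub_ne_zero_of_ne (ht' i)
      exact (Finset.prod_ne_zero_iff.2 fun i _ => hne i) this
end

section
/- Let K be a field, < a monomial order on the monomials of S = K[X_1,…,X_n], X ⊆ K^n a finite set, and I := I(X) its vanishing ideal. Then the evaluation map ev_{N(I)}^X : S_{N(I)} → K^X is bijective; in particular, the normal set N(I) has exactly |X| elements. -/
open MvPolynomial
open scoped MonomialOrder

/-- `α` is the leading monomial (exponent) of `p` with respect to the monomial order `m`. -/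
def IsLeadMon {K : Type*} [Field K] {n : ℕ} (m : MonomialOrder (Fin n))
    (p : MvPolynomial (Fin n) K) (α : Fin n →₀ ℕ) : Prop :=
  α ∈ p.support ∧ ∀ β ∈ p.support, β ≠ α → β ≺[m] α

/-- The normal set `N(I) = Mon(S) \ in(I)`: exponents of monomials not lying in the
initial ideal of `I`, i.e. not divisible by the leading monomial of any nonzero `p ∈ I`. -/
def normalSet {K : Type*} [Field K] {n : ℕ} (m : MonomialOrder (Fin n))
    (I : Ideal (MvPolynomial (Fin n) K)) : Set (Fin n →₀ ℕ) :=
  {β | ¬ ∃ p ∈ I, ∃ α, IsLeadMon m p α ∧ ∃ γ, β = α + γ}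

section Aux

variable {K : Type*} [Field K] {n : ℕ} (m : MonomialOrder (Fin n))

theorem exists_leadMon {p : MvPolynomial (Fin n) K} (hp : p ≠ 0) :
    ∃ α, IsLeadMon m p α := by
  obtain ⟨α, hα, hmax⟩ := p.support.exists_max_image m.toSyn
    (MvPolynomial.support_nonempty.mpr hp)
  exact ⟨α, hα, fun β hβ hne => lt_of_le_of_ne (hmax β hβ)
    (fun h => hne (m.toSyn.injective h))⟩

/-- Injectivity of the evaluation on the normal set span. -/
theorem eval_inj (X : Finset (Fin n → K)) (p : MvPolynomial (Fin n) K)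
    (hs : ∀ β ∈ p.support, β ∈ normalSet m (vanishingIdeal K (X : Set (Fin n → K))))
    (hv : ∀ x ∈ X, eval x p = 0) : p = 0 := by
  by_contra hp
  obtain ⟨α, hα⟩ := exists_leadMon m hp
  exact hs α hα.1 ⟨p, mem_vanishingIdeal_iff.mpr (fun x hx => hv x hx), α, hα, 0,
    (add_zero α).symm⟩

/-- Normal form: every polynomial is congruent mod `I` to one supported in `N(I)`. -/
theorem exists_normalForm (I : Ideal (MvPolynomial (Fin n) K)) (q : MvPolynomial (Fin n) K) :
    ∃ r : MvPolynomial (Fin n) K,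
      (∀ β ∈ r.support, β ∈ normalSet m I) ∧ q - r ∈ I := by
  classical
  set N := normalSet m I with hN
  let bad : MvPolynomial (Fin n) K → Finset (Fin n →₀ ℕ) :=
    fun q => q.support.filter (fun β => β ∉ N)
  let bm : MvPolynomial (Fin n) K → WithBot m.syn :=
    fun q => (bad q).sup (fun β => (m.toSyn β : WithBot m.syn))
  suffices H : ∀ b : WithBot m.syn, ∀ q : MvPolynomial (Fin n) K, bm q = b →
      ∃ r : MvPolynomial (Fin n) K, (∀ β ∈ r.support, β ∈ N) ∧ q - r ∈ I by
    exact H (bm q) q rfl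
  intro b
  induction b using WellFoundedLT.induction with
  | ind b IH =>
    intro q hq
    by_cases hbad : bad q = ∅
    · refine ⟨q, fun β hβ => ?_, by simpa using I.zero_mem⟩
      by_contra hβN
      have : β ∈ bad q := Finset.mem_filter.mpr ⟨hβ, hβN⟩
      simp [hbad] at this
    · obtain ⟨β, hβ, hβmax⟩ := (bad q).exists_max_image m.toSyn
        (Finset.nonempty_iff_ne_empty.mpr hbad)
      obtain ⟨hβsupp, hβN⟩ := Finset.mem_filter.mp hβ
      obtain ⟨p, hpI, α, hlead, γ, hβαγ⟩ := not_not.mp hβN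
      have hpα : MvPolynomial.coeff α p ≠ 0 := by
        simpa [MvPolynomial.mem_support_iff] using hlead.1
      set c : K := MvPolynomial.coeff β q / MvPolynomial.coeff α p with hc
      set q' : MvPolynomial (Fin n) K := q - monomial γ c * p with hq'
      have hβ' : m.toSyn β = m.toSyn α + m.toSyn γ := by rw [hβαγ, map_add]
      -- all monomials in the support of the product are at most β
      have hprod_supp : ∀ δ ∈ (monomial γ c * p).support, m.toSyn δ ≤ m.toSyn β ∧
          (δ ≠ β → m.toSyn δ < m.toSyn β) := by
        intro δ hδ
        rw [MvPolynomial.mem_support_iff, coeff_monomial_mul'] at hδ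
        by_cases hγδ : γ ≤ δ
        · have hδγ : δ - γ ∈ p.support := by
            rw [MvPolynomial.mem_support_iff]
            intro h0
            simp [hγδ, h0] at hδ
          have hδeq : δ = (δ - γ) + γ := (tsub_add_cancel_of_le hγδ).symm
          have key : ∀ ε ∈ p.support, m.toSyn (ε + γ) ≤ m.toSyn β ∧
              (ε ≠ α → m.toSyn (ε + γ) < m.toSyn β) := by
            intro ε hε
            constructor
            · rw [map_add, hβ']
              rcases eq_or_ne ε α with rfl | hne
              · exact le_refl _
              · exact le_of_lt (add_lt_add_left (hlead.2 ε hε hne) _)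
            · intro hne
              rw [map_add, hβ']
              exact add_lt_add_left (hlead.2 ε hε hne) _
          have h1 := key (δ - γ) hδγ
          constructor
          · rw [hδeq]; exact h1.1
          · intro hδβ
            rw [hδeq]
            refine h1.2 (fun h => hδβ ?_)
            rw [hδeq, h, ← hβαγ]
        · simp [hγδ] at hδ
      have hcoeffβ : MvPolynomial.coeff β q' = 0 := by
        rw [hq', MvPolynomial.coeff_sub, coeff_monomial_mul']
        have hγβ : γ ≤ β := by rw [hβαγ]; exact le_add_self
        rw [if_pos hγβ]
        have : β - γ = α := by rw [hβαγ, add_tsub_cancel_right]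
        rw [this, hc, div_mul_cancel₀ _ hpα, sub_self]
      -- all bad monomials of q' are strictly below β
      have hbad' : ∀ δ ∈ bad q', m.toSyn δ < m.toSyn β := by
        intro δ hδ
        obtain ⟨hδsupp, hδN⟩ := Finset.mem_filter.mp hδ
        have hδβ : δ ≠ β := by
          intro h; rw [h] at hδsupp
          exact (MvPolynomial.mem_support_iff.mp hδsupp) hcoeffβ
        have : δ ∈ q.support ∪ (monomial γ c * p).support := by
          rw [hq'] at hδsupp
          exact MvPolynomial.support_sub _ _ _ hδsupp
        rcases Finset.mem_union.mp this with h | h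
        · have : δ ∈ bad q := Finset.mem_filter.mpr ⟨h, hδN⟩
          exact lt_of_le_of_ne (hβmax δ this) (fun he => hδβ (m.toSyn.injective he))
        · exact (hprod_supp δ h).2 hδβ
      have hbmq : bm q = (m.toSyn β : WithBot m.syn) := by
        apply le_antisymm
        · exact Finset.sup_le fun δ hδ => WithBot.coe_le_coe.mpr (hβmax δ hδ)
        · exact Finset.le_sup (f := fun δ => (m.toSyn δ : WithBot m.syn)) hβ
      have hbmq' : bm q' < b := by
        rw [← hq, hbmq]
        show (bad q').sup (fun β => (m.toSyn β : WithBot m.syn)) < _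
        rw [Finset.sup_lt_iff (WithBot.bot_lt_coe (m.toSyn β))]
        intro δ hδ
        exact WithBot.coe_lt_coe.mpr (hbad' δ hδ)
      obtain ⟨r, hr, hq'r⟩ := IH (bm q') hbmq' q' rfl
      refine ⟨r, hr, ?_⟩
      have : q - r = (monomial γ c * p) + (q' - r) := by rw [hq']; ring
      rw [this]
      exact Ideal.add_mem _ (Ideal.mul_mem_left _ _ hpI) hq'r

open Classical in
/-- Separating polynomial: value 1 at `x`, value 0 at `y`, when `x ≠ y`. -/
noncomputable def sepPoly (x y : Fin n → K) : MvPolynomial (Fin n) K :=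
  if h : x = y then 1 else
    C (x (Function.ne_iff.mp h).choose - y (Function.ne_iff.mp h).choose)⁻¹ *
      (X (Function.ne_iff.mp h).choose - C (y (Function.ne_iff.mp h).choose))

theorem sepPoly_self_eval {x y : Fin n → K} (h : x ≠ y) : eval x (sepPoly x y) = 1 := by
  rw [sepPoly, dif_neg h]
  have hi := (Function.ne_iff.mp h).choose_spec
  simp only [map_mul, eval_C, map_sub, eval_X]
  exact inv_mul_cancel₀ (sub_ne_zero_of_ne hi)

theorem sepPoly_other_eval {x y : Fin n → K} (h : x ≠ y) : eval y (sepPoly x y) = 0 := by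
  rw [sepPoly, dif_neg h]
  simp

/-- Interpolation: any function on a finite set is realized by a polynomial. -/
theorem exists_interpolation (X : Finset (Fin n → K)) (g : (Fin n → K) → K) :
    ∃ p : MvPolynomial (Fin n) K, ∀ x ∈ X, eval x p = g x := by
  classical
  refine ⟨∑ x ∈ X, C (g x) * ∏ y ∈ X.erase x, sepPoly x y, ?_⟩
  intro z hz
  rw [map_sum]
  rw [Finset.sum_eq_single z]
  · rw [map_mul, eval_C, map_prod]
    rw [Finset.prod_eq_one fun y hy => sepPoly_self_eval (Finset.ne_of_mem_erase hy).symm]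
    ring
  · intro x hx hxz
    rw [map_mul, map_prod]
    rw [Finset.prod_eq_zero (Finset.mem_erase.mpr ⟨fun h => hxz h.symm, hz⟩)
      (sepPoly_other_eval hxz)]
    ring
  · intro h; exact absurd hz h

end Aux

/-- For a monomial order `m` and a finite set `X ⊆ K^n` with vanishing ideal
`I := I(X)`, the evaluation map `ev_{N(I)}^X : S_{N(I)} → K^X` is bijective (injective and
surjective); in particular `N(I)` is finite with exactly `|X|` elements. -/
theorem stmt5 (K : Type*) [Field K] (n : ℕ) (m : MonomialOrder (Fin n))
    (X : Finset (Fin n → K)) :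
    (∀ p : MvPolynomial (Fin n) K,
      (∀ β ∈ p.support, β ∈ normalSet m (MvPolynomial.vanishingIdeal K (X : Set (Fin n → K)))) →
      (∀ x ∈ X, MvPolynomial.eval x p = 0) → p = 0) ∧
    (∀ g : (Fin n → K) → K, ∃ p : MvPolynomial (Fin n) K,
      (∀ β ∈ p.support, β ∈ normalSet m (MvPolynomial.vanishingIdeal K (X : Set (Fin n → K)))) ∧
      ∀ x ∈ X, MvPolynomial.eval x p = g x) ∧
    (normalSet m (MvPolynomial.vanishingIdeal K (X : Set (Fin n → K)))).Finite ∧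
    (normalSet m (MvPolynomial.vanishingIdeal K (X : Set (Fin n → K)))).ncard = X.card := by
  classical
  set I := MvPolynomial.vanishingIdeal K (X : Set (Fin n → K)) with hI
  set N := normalSet m I with hNdef
  -- Part 1: injectivity
  have part1 : ∀ p : MvPolynomial (Fin n) K,
      (∀ β ∈ p.support, β ∈ N) → (∀ x ∈ X, MvPolynomial.eval x p = 0) → p = 0 :=
    fun p hs hv => eval_inj m X p hs hv
  -- Part 2: surjectivity
  have part2 : ∀ g : (Fin n → K) → K, ∃ p : MvPolynomial (Fin n) K,
      (∀ β ∈ p.support, β ∈ N) ∧ ∀ x ∈ X, MvPolynomial.eval x p = g x := by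
    intro g
    obtain ⟨q, hq⟩ := exists_interpolation X g
    obtain ⟨r, hr, hqr⟩ := exists_normalForm m I q
    refine ⟨r, hr, fun x hx => ?_⟩
    have := MvPolynomial.mem_vanishingIdeal_iff.mp hqr x (by exact_mod_cast hx)
    rw [map_sub, sub_eq_zero] at this
    replace this : MvPolynomial.eval x q = MvPolynomial.eval x r := this
    rw [← this, hq x hx]
  -- Linear algebra: basis of K^X indexed by N
  let evX : MvPolynomial (Fin n) K →ₗ[K] (↥X → K) :=
    { toFun := fun p => fun x => MvPolynomial.eval x.1 p
      map_add' := fun p q => funext fun x => map_add _ _ _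
      map_smul' := fun c p => funext fun x => by
        simp [MvPolynomial.smul_eq_C_mul] }
  let v : ↥N → (↥X → K) := fun β => evX (MvPolynomial.monomial β.1 1)
  have hevX_mono : ∀ (β : Fin n →₀ ℕ) (c : K) (hβ : β ∈ N),
      evX (MvPolynomial.monomial β c) = c • v ⟨β, hβ⟩ := by
    intro β c hβ
    funext x
    simp [evX, v, MvPolynomial.eval_monomial]
  have hli : LinearIndependent K v := by
    rw [linearIndependent_iff]
    intro l hl
    set p : MvPolynomial (Fin n) K :=
      ∑ β ∈ l.support, MvPolynomial.monomial β.1 (l β) with hp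
    have hsupp : ∀ δ ∈ p.support, δ ∈ N := by
      intro δ hδ
      have := MvPolynomial.support_sum hδ
      obtain ⟨β, hβl, hδβ⟩ := Finset.mem_biUnion.mp this
      have := MvPolynomial.support_monomial_subset hδβ
      rw [Finset.mem_singleton] at this
      rw [this]
      exact β.2
    have hcomb : Finsupp.linearCombination K v l = evX p := by
      rw [hp, map_sum, Finsupp.linearCombination_apply, Finsupp.sum]
      refine Finset.sum_congr rfl fun β hβ => ?_
      rw [hevX_mono β.1 (l β) β.2]
    have hpz : p = 0 := by
      refine part1 p hsupp fun x hx => ?_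
      have : evX p = 0 := by rw [← hcomb, hl]
      have := congrFun this ⟨x, hx⟩
      simpa [evX] using this
    refine Finsupp.ext fun b => ?_
    have : MvPolynomial.coeff b.1 p = l b := by
      rw [hp, MvPolynomial.coeff_sum]
      have : ∀ β ∈ l.support,
          MvPolynomial.coeff b.1 (MvPolynomial.monomial β.1 (l β)) =
            if β = b then l β else 0 := by
        intro β hβ
        rw [MvPolynomial.coeff_monomial]
        congr 1
        simp [Subtype.ext_iff]
      rw [Finset.sum_congr rfl this, Finset.sum_ite_eq' l.support b (fun β => l β)]
      split_ifs with h
      · rfl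
      · exact (Finsupp.notMem_support_iff.mp h).symm
    rw [hpz] at this
    simpa using this.symm
  have hspan : ⊤ ≤ Submodule.span K (Set.range v) := by
    intro g _
    obtain ⟨p, hp, hpe⟩ := part2 (fun x => if h : x ∈ X then g ⟨x, h⟩ else 0)
    have hg : g = evX p := by
      funext x
      have := hpe x.1 x.2
      simp only [dif_pos x.2] at this
      simpa [evX] using this.symm
    rw [hg]
    have hps : evX p = ∑ β ∈ p.support, evX (MvPolynomial.monomial β (MvPolynomial.coeff β p)) := by
      conv_lhs => rw [p.as_sum]
      rw [map_sum]
    rw [hps]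
    refine Submodule.sum_mem _ fun β hβ => ?_
    rw [hevX_mono β (MvPolynomial.coeff β p) (hp β hβ)]
    exact Submodule.smul_mem _ _ (Submodule.subset_span (Set.mem_range_self _))
  let b : Module.Basis ↥N K (↥X → K) := Module.Basis.mk hli hspan
  haveI : Fintype ↥N := FiniteDimensional.fintypeBasisIndex b
  have hfin : N.Finite := N.toFinite
  refine ⟨part1, part2, hfin, ?_⟩
  have h1 : Module.finrank K (↥X → K) = Fintype.card ↥N :=
    Module.finrank_eq_card_basis b
  have h2 : Module.finrank K (↥X → K) = X.card := by
    rw [Module.finrank_pi, Fintype.card_coe]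
  rw [← Nat.card_coe_set_eq, Nat.card_eq_fintype_card, ← h1, h2]
end

section
/- (Möller) Let K be a field, < a monomial order on the monomials of S = K[X_1,…,X_n], X ⊆ K^n a finite set, and D a finite distinguished order ideal of monomials with respect to < such that ev_D^X : S_D → K^X is surjective. Then there exists a Gröbner basis G of the vanishing ideal I(X) with respect to < such that G ⊆ S_{D∪∂D} (every element of G is a K-linear combination of monomials in D ∪ ∂D) and |G| = |D| + |∂D| − |X|. -/
open MvPolynomial
open scoped MonomialOrder

/-- The border `∂D` of an order ideal of monomials `D`:
`∂D = (X_1·D ∪ … ∪ X_n·D) \ D` for `D ≠ ∅`, and `∂∅ = {1}` (i.e. `{0}` on exponents). -/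
noncomputable def borderOf {n : ℕ} (D : Finset (Fin n →₀ ℕ)) : Finset (Fin n →₀ ℕ) := by
  classical
  exact if D = ∅ then {0}
    else (D.biUnion fun α => Finset.image (fun j => α + Finsupp.single j 1) Finset.univ) \ D

lemma li_aux {K M ι B : Type*} [Field K] [AddCommGroup M] [Module K M] [LinearOrder B]
    (g : ι → B) (hg : Function.Injective g) (f : ι → M)
    (h : ∀ i, f i ∉ Submodule.span K (f '' {j | g j < g i})) :
    LinearIndependent K f := by
  classical
  rw [linearIndependent_iff]
  intro l hl
  by_contra hne
  obtain ⟨i, hi, hmax⟩ := l.support.exists_max_image g (Finsupp.support_nonempty_iff.mpr hne)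
  apply h i
  have hli : l i ≠ 0 := Finsupp.mem_support_iff.mp hi
  rw [Finsupp.linearCombination_apply, Finsupp.sum,
    ← Finset.add_sum_erase _ _ hi] at hl
  have h2 : f i = (l i)⁻¹ • (-(∑ j ∈ l.support.erase i, l j • f j)) := by
    rw [← eq_neg_of_add_eq_zero_left hl, inv_smul_smul₀ hli]
  rw [h2]
  refine Submodule.smul_mem _ _ (Submodule.neg_mem _ (Submodule.sum_mem _ fun j hj => ?_))
  refine Submodule.smul_mem _ _ (Submodule.subset_span ⟨j, ?_, rfl⟩)
  have hji := Finset.ne_of_mem_erase hj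
  exact lt_of_le_of_ne (hmax j (Finset.mem_of_mem_erase hj)) (fun e => hji (hg e))

lemma coeff_sum_monomial {K : Type*} [Field K] {n : ℕ} (l : (Fin n →₀ ℕ) →₀ K) (δ : Fin n →₀ ℕ) :
    MvPolynomial.coeff δ (∑ γ ∈ l.support, MvPolynomial.monomial γ (l γ)) = l δ := by
  classical
  rw [MvPolynomial.coeff_sum]
  simp only [MvPolynomial.coeff_monomial]
  rw [Finset.sum_ite_eq' l.support δ]
  split
  · rfl
  · exact (Finsupp.notMem_support_iff.mp (by assumption)).symm

lemma borderOf_empty {n : ℕ} : borderOf (∅ : Finset (Fin n →₀ ℕ)) = {0} := by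
  simp [borderOf]

lemma borderOf_ne {n : ℕ} {D : Finset (Fin n →₀ ℕ)} (h : D ≠ ∅) :
    borderOf D =
      (D.biUnion fun α => Finset.image (fun j => α + Finsupp.single j 1) Finset.univ) \ D := by
  simp [borderOf, h]

lemma border_divisor {n : ℕ} (D : Finset (Fin n →₀ ℕ))
    (hOI : ∀ β ∈ D, ∀ α γ : Fin n →₀ ℕ, α + γ = β → α ∈ D)
    (α : Fin n →₀ ℕ) (hα : α ∉ D) :
    ∃ β, β ∈ borderOf D ∧ β ∉ D ∧ ∃ δ, β + δ = α := by
  classical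
  by_cases hD : D = ∅
  · exact ⟨0, by simp [borderOf_empty, hD], by simp [hD], α, zero_add α⟩
  · have h0D : (0 : Fin n →₀ ℕ) ∈ D := by
      obtain ⟨β, hβ⟩ := Finset.nonempty_iff_ne_empty.mpr hD
      exact hOI β hβ 0 β (zero_add β)
    suffices h : ∀ d : ℕ, ∀ α : Fin n →₀ ℕ, (α.sum fun _ k => k) = d → α ∉ D →
        ∃ β, β ∈ borderOf D ∧ β ∉ D ∧ ∃ δ, β + δ = α from h _ α rfl hα
    intro d
    induction d using Nat.strong_induction_on with
    | _ d IH =>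
      intro α hd hαD
      have hα0 : α ≠ 0 := fun h => hαD (h ▸ h0D)
      obtain ⟨j, hj⟩ : ∃ j, α j ≠ 0 := by
        by_contra hc; push_neg at hc
        exact hα0 (Finsupp.ext fun k => hc k)
      have hadd : (α - Finsupp.single j 1) + Finsupp.single j 1 = α := by
        ext k
        simp only [Finsupp.add_apply, Finsupp.tsub_apply, Finsupp.single_apply]
        rcases eq_or_ne j k with rfl | hne
        · simp only [if_pos rfl]
          simp only [if_true]
          omega
        · simp [hne]
      obtain ⟨α', hadd⟩ : ∃ α', α' + Finsupp.single j 1 = α := ⟨_, hadd⟩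
      by_cases hα' : α' ∈ D
      · refine ⟨α, ?_, hαD, 0, add_zero α⟩
        rw [borderOf_ne hD, Finset.mem_sdiff]
        refine ⟨Finset.mem_biUnion.mpr ⟨_, hα', Finset.mem_image.mpr ⟨j, Finset.mem_univ j, hadd⟩⟩, hαD⟩
      · have hsum : (α'.sum fun _ k => k) + 1 = d := by
          rw [← hd, ← hadd]
          rw [Finsupp.sum_add_index' (fun _ => rfl) (fun _ _ _ => rfl)]
          rw [Finsupp.sum_single_index rfl]
        obtain ⟨β, hβ1, hβ2, δ, hδ⟩ := IH _ (by omega) _ rfl hα'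
        exact ⟨β, hβ1, hβ2, δ + Finsupp.single j 1, by rw [← add_assoc, hδ, hadd]⟩

/-- Möller: Let `m` be a monomial order, `X ⊆ K^n` finite, and `D` a finite
distinguished order ideal of monomials such that `ev_D^X : S_D → K^X` is surjective.  Then
there is a Gröbner basis `G` of the vanishing ideal `I(X)` with respect to `m` (i.e.
`G ⊆ I(X)` and the leading monomials of the elements of `G` generate the initial ideal
`in(I(X))`) such that `G ⊆ S_{D ∪ ∂D}` and `|G| = |D| + |∂D| − |X|`. -/
theorem stmt8 (K : Type*) [Field K] (n : ℕ) (m : MonomialOrder (Fin n))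
    (X : Finset (Fin n → K)) (D : Finset (Fin n →₀ ℕ))
    (hOI : ∀ β ∈ D, ∀ α γ : Fin n →₀ ℕ, α + γ = β → α ∈ D)
    (hDist : ∀ t ∈ D, ∀ s : Fin n →₀ ℕ, s ∉ D → (t ≺[m] s))
    (hsurj : ∀ g : (Fin n → K) → K, ∃ p : MvPolynomial (Fin n) K,
      (∀ β ∈ p.support, β ∈ D) ∧ ∀ x ∈ X, MvPolynomial.eval x p = g x) :
    ∃ G : Finset (MvPolynomial (Fin n) K),
      (∀ g ∈ G, g ∈ MvPolynomial.vanishingIdeal K (X : Set (Fin n → K))) ∧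
      Ideal.span ((fun α => MvPolynomial.monomial α (1 : K)) ''
          {α : Fin n →₀ ℕ | ∃ g ∈ G, IsLeadMon m g α})
        = Ideal.span ((fun α => MvPolynomial.monomial α (1 : K)) ''
          {α : Fin n →₀ ℕ |
            ∃ p ∈ MvPolynomial.vanishingIdeal K (X : Set (Fin n → K)), IsLeadMon m p α}) ∧
      (∀ g ∈ G, ∀ β ∈ g.support, β ∈ D ∪ borderOf D) ∧
      G.card = D.card + (borderOf D).card - X.card := by
  classical
  set E : Finset (Fin n →₀ ℕ) := D ∪ borderOf D with hEdef
  set v : (Fin n →₀ ℕ) → (↥X → K) :=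
    fun β x => eval (x : Fin n → K) (monomial β (1 : K)) with hvdef
  set Nset : Finset (Fin n →₀ ℕ) := E.filter
    (fun β => v β ∉ Submodule.span K (v '' {γ | γ ∈ E ∧ (γ ≺[m] β)})) with hNdef
  have heval : ∀ (p : MvPolynomial (Fin n) K) (x : ↥X),
      eval (x : Fin n → K) p = ∑ β ∈ p.support, coeff β p * v β x := by
    intro p x
    rw [eval_eq]
    refine Finset.sum_congr rfl fun β _ => ?_
    simp [hvdef, eval_monomial, Finsupp.prod]
  have hspanD : Submodule.span K (v '' ↑D) = ⊤ := by
    rw [eq_top_iff]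
    intro g _
    obtain ⟨p, hsupp, hev⟩ := hsurj (fun y => if h : y ∈ X then g ⟨y, h⟩ else 0)
    have hg : g = ∑ β ∈ p.support, coeff β p • v β := by
      funext x
      have hx := hev x.1 x.2
      rw [heval] at hx
      simp only [x.2, dif_pos, Subtype.coe_eta] at hx
      rw [Finset.sum_apply]
      simp only [Pi.smul_apply, smul_eq_mul]
      rw [hx]
    rw [hg]
    exact Submodule.sum_mem _ fun β hβ =>
      Submodule.smul_mem _ _ (Submodule.subset_span ⟨β, hsupp β hβ, rfl⟩)
  have hDE : D ⊆ E := Finset.subset_union_left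
  have hNE : Nset ⊆ E := Finset.filter_subset _ _
  have hNprop : ∀ β ∈ Nset, v β ∉ Submodule.span K (v '' {γ | γ ∈ E ∧ (γ ≺[m] β)}) :=
    fun β hβ => (Finset.mem_filter.mp hβ).2
  have hNmem : ∀ β ∈ E, β ∉ Nset → v β ∈ Submodule.span K (v '' {γ | γ ∈ E ∧ (γ ≺[m] β)}) := by
    intro β hβ hn
    by_contra hc
    exact hn (Finset.mem_filter.mpr ⟨hβ, hc⟩)
  have hNsubD : ∀ β ∈ Nset, β ∈ D := by
    intro β hβ
    by_contra hβD
    apply hNprop β hβ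
    have hsub : (v '' ↑D) ⊆ v '' {γ | γ ∈ E ∧ (γ ≺[m] β)} :=
      Set.image_mono (fun γ hγ => ⟨hDE hγ, hDist γ hγ β hβD⟩)
    have hle := Submodule.span_mono (R := K) hsub
    rw [hspanD] at hle
    exact hle Submodule.mem_top
  have hgreedy : ∀ β ∈ E, v β ∈ Submodule.span K (v '' {γ | γ ∈ Nset ∧ (γ ≼[m] β)}) := by
    have key : ∀ s : m.syn, ∀ β ∈ E, m.toSyn β = s →
        v β ∈ Submodule.span K (v '' {γ | γ ∈ Nset ∧ (γ ≼[m] β)}) := by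
      intro s
      induction s using WellFoundedLT.induction with
      | ind s IH =>
        intro β hβ hs
        by_cases hN : β ∈ Nset
        · exact Submodule.subset_span ⟨β, ⟨hN, le_refl _⟩, rfl⟩
        · refine Submodule.span_le.mpr ?_ (hNmem β hβ hN)
          rintro _ ⟨γ, ⟨hγE, hγlt⟩, rfl⟩
          have h2 := IH (m.toSyn γ) (hs ▸ hγlt) γ hγE rfl
          refine Submodule.span_le.mpr ?_ h2
          rintro _ ⟨δ, ⟨hδN, hδle⟩, rfl⟩
          exact Submodule.subset_span ⟨δ, ⟨hδN, le_trans hδle (le_of_lt hγlt)⟩, rfl⟩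
    exact fun β hβ => key _ β hβ rfl
  have hLI : LinearIndependent K (fun b : ↥Nset => v b.1) := by
    apply li_aux (fun b : ↥Nset => m.toSyn b.1)
      (fun a b hab => Subtype.ext (m.toSyn.injective hab))
    intro i hmem
    apply hNprop i.1 i.2
    refine Submodule.span_mono ?_ hmem
    rintro _ ⟨j, hj, rfl⟩
    exact ⟨j.1, ⟨hNE j.2, hj⟩, rfl⟩
  have hspanNtop : ⊤ ≤ Submodule.span K (Set.range fun b : ↥Nset => v b.1) := by
    rw [← hspanD]
    refine Submodule.span_le.mpr ?_
    rintro _ ⟨β, hβ, rfl⟩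
    refine Submodule.span_le.mpr ?_ (hgreedy β (hDE hβ))
    rintro _ ⟨γ, ⟨hγN, _⟩, rfl⟩
    exact Submodule.subset_span ⟨⟨γ, hγN⟩, rfl⟩
  have hcardN : Nset.card = X.card := by
    have hB := Module.Basis.mk hLI hspanNtop
    have h1 : Module.finrank K (↥X → K) = Fintype.card ↥Nset :=
      Module.finrank_eq_card_basis hB
    have h2 : Module.finrank K (↥X → K) = Fintype.card ↥X := Module.finrank_pi K
    rw [h1] at h2
    rw [← Fintype.card_coe Nset, ← Fintype.card_coe X, ← h2]
  have hA : ∀ p ∈ MvPolynomial.vanishingIdeal K (X : Set (Fin n → K)),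
      ∀ α, IsLeadMon m p α → α ∉ Nset := by
    intro p hp α hlead hαN
    apply hNprop α hαN
    have hsupp2 : ∀ γ ∈ p.support.erase α, γ ∈ E ∧ (γ ≺[m] α) := by
      intro γ hγ
      have hne := Finset.ne_of_mem_erase hγ
      have hγs := Finset.mem_of_mem_erase hγ
      have hlt := hlead.2 γ hγs hne
      refine ⟨hDE ?_, hlt⟩
      by_contra hc
      exact absurd (hDist α (hNsubD α hαN) γ hc) (not_lt.mpr hlt.le)
    have hcα : coeff α p ≠ 0 := MvPolynomial.mem_support_iff.mp hlead.1
    have hsum : ∀ x : ↥X,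
        coeff α p * v α x + ∑ γ ∈ p.support.erase α, coeff γ p * v γ x = 0 := by
      intro x
      have h0 : eval (x : Fin n → K) p = 0 := hp x.1 x.2
      rw [heval, ← Finset.add_sum_erase _ _ hlead.1] at h0
      exact h0
    have hvα : v α = (-(coeff α p)⁻¹) • ∑ γ ∈ p.support.erase α, coeff γ p • v γ := by
      funext x
      have h := hsum x
      have hS : (∑ γ ∈ p.support.erase α, coeff γ p * v γ x) = -(coeff α p * v α x) :=
        eq_neg_of_add_eq_zero_right h
      simp only [Pi.smul_apply, Finset.sum_apply, Pi.smul_apply, smul_eq_mul]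
      rw [hS]
      field_simp
    rw [hvα]
    exact Submodule.smul_mem _ _ (Submodule.sum_mem _ fun γ hγ =>
      Submodule.smul_mem _ _ (Submodule.subset_span ⟨γ, hsupp2 γ hγ, rfl⟩))
  have hB : ∀ β ∈ E, β ∉ Nset → ∃ g : MvPolynomial (Fin n) K,
      g ∈ MvPolynomial.vanishingIdeal K (X : Set (Fin n → K)) ∧ IsLeadMon m g β ∧
      (∀ γ ∈ g.support, γ ∈ E) := by
    intro β hβE hβN
    have h1 := hgreedy β hβE
    have hsetEq : {γ | γ ∈ Nset ∧ (γ ≼[m] β)} = {γ | γ ∈ Nset ∧ (γ ≺[m] β)} := by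
      ext γ
      constructor
      · rintro ⟨h2, h3⟩
        refine ⟨h2, lt_of_le_of_ne h3 fun he => hβN ?_⟩
        rwa [m.toSyn.injective he] at h2
      · rintro ⟨h2, h3⟩
        exact ⟨h2, le_of_lt h3⟩
    rw [hsetEq, Finsupp.mem_span_image_iff_linearCombination] at h1
    obtain ⟨l, hlsupp, hlc⟩ := h1
    rw [Finsupp.mem_supported] at hlsupp
    have hlmem : ∀ γ ∈ l.support, γ ∈ Nset ∧ (γ ≺[m] β) := fun γ hγ => hlsupp hγ
    have hcoeffg : ∀ δ, coeff δ (monomial β (1 : K) - ∑ γ ∈ l.support, monomial γ (l γ)) =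
        (if β = δ then 1 else 0) - l δ := by
      intro δ
      rw [MvPolynomial.coeff_sub, MvPolynomial.coeff_monomial, coeff_sum_monomial]
    have hlβ : l β = 0 := by
      by_contra hc
      exact (lt_irrefl _ (hlmem β (Finsupp.mem_support_iff.mpr hc)).2)
    refine ⟨monomial β (1 : K) - ∑ γ ∈ l.support, monomial γ (l γ), ?_, ?_, ?_⟩
    · intro x hx
      rw [map_sub, map_sum]
      have hlcx := congrFun hlc ⟨x, hx⟩
      rw [Finsupp.linearCombination_apply, Finsupp.sum, Finset.sum_apply] at hlcx
      simp only [Pi.smul_apply, smul_eq_mul] at hlcx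
      have : ∀ γ ∈ l.support, eval x (monomial γ (l γ)) = l γ * v γ ⟨x, hx⟩ := by
        intro γ _
        simp [hvdef, eval_monomial]
      simp only [MvPolynomial.aeval_eq_eval]
      rw [Finset.sum_congr rfl this, hlcx]
      simp [hvdef]
    · constructor
      · rw [MvPolynomial.mem_support_iff, hcoeffg, if_pos rfl, hlβ]
        norm_num
      · intro γ hγ hne
        rw [MvPolynomial.mem_support_iff, hcoeffg, if_neg (fun h => hne h.symm)] at hγ
        have : l γ ≠ 0 := by
          intro h
          rw [h] at hγ
          simp at hγ
        exact (hlmem γ (Finsupp.mem_support_iff.mpr this)).2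
    · intro γ hγ
      rw [MvPolynomial.mem_support_iff, hcoeffg] at hγ
      by_cases hbe : β = γ
      · exact hbe ▸ hβE
      · rw [if_neg hbe] at hγ
        have : l γ ≠ 0 := by
          intro h
          rw [h] at hγ
          simp at hγ
        exact hNE (hlmem γ (Finsupp.mem_support_iff.mpr this)).1
  -- construct G
  have hTprop : ∀ b : ↥(E \ Nset), ∃ g : MvPolynomial (Fin n) K,
      g ∈ MvPolynomial.vanishingIdeal K (X : Set (Fin n → K)) ∧ IsLeadMon m g b.1 ∧
      (∀ γ ∈ g.support, γ ∈ E) := fun b =>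
    hB b.1 (Finset.mem_sdiff.mp b.2).1 (Finset.mem_sdiff.mp b.2).2
  choose gf hgf1 hgf2 hgf3 using hTprop
  have hinj : Function.Injective gf := by
    intro a b hab
    by_contra hne
    have hne' : a.1 ≠ b.1 := fun h => hne (Subtype.ext h)
    have h1 := hgf2 a
    have h2 := hgf2 b
    rw [hab] at h1
    exact lt_asymm (h2.2 a.1 h1.1 hne') (h1.2 b.1 h2.1 (Ne.symm hne'))
  refine ⟨(E \ Nset).attach.image gf, ?_, ?_, ?_, ?_⟩
  · intro g hg
    obtain ⟨b, _, rfl⟩ := Finset.mem_image.mp hg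
    exact hgf1 b
  · apply le_antisymm
    · apply Ideal.span_mono
      apply Set.image_mono
      rintro α ⟨g, hgG, hlead⟩
      obtain ⟨b, _, rfl⟩ := Finset.mem_image.mp hgG
      exact ⟨gf b, hgf1 b, hlead⟩
    · rw [Ideal.span_le]
      rintro _ ⟨α, ⟨p, hp, hlead⟩, rfl⟩
      obtain ⟨β, hβT, δ, hδ⟩ : ∃ β, β ∈ E \ Nset ∧ ∃ δ, β + δ = α := by
        by_cases hαD : α ∈ D
        · exact ⟨α, Finset.mem_sdiff.mpr ⟨hDE hαD, hA p hp α hlead⟩, 0, add_zero α⟩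
        · obtain ⟨β, hβb, hβD, δ, hδ⟩ := border_divisor D hOI α hαD
          exact ⟨β, Finset.mem_sdiff.mpr ⟨Finset.mem_union_right _ hβb,
            fun hc => hβD (hNsubD β hc)⟩, δ, hδ⟩
      have hmem : monomial β (1 : K) ∈ Ideal.span ((fun α => monomial α (1 : K)) ''
          {α : Fin n →₀ ℕ | ∃ g ∈ (E \ Nset).attach.image gf, IsLeadMon m g α}) :=
        Ideal.subset_span ⟨β, ⟨gf ⟨β, hβT⟩,
          Finset.mem_image.mpr ⟨⟨β, hβT⟩, Finset.mem_attach _ _, rfl⟩, hgf2 ⟨β, hβT⟩⟩, rfl⟩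
      have hmul : monomial α (1 : K) = monomial δ (1 : K) * monomial β (1 : K) := by
        rw [MvPolynomial.monomial_mul, one_mul, add_comm δ β, hδ]
      simp only [SetLike.mem_coe]
      rw [hmul]
      exact Ideal.mul_mem_left _ _ hmem
  · intro g hg β hβ
    obtain ⟨b, _, rfl⟩ := Finset.mem_image.mp hg
    exact hgf3 b β hβ
  · rw [Finset.card_image_of_injective _ hinj, Finset.card_attach,
      Finset.card_sdiff_of_subset hNE, hcardN]
    congr 1
    rw [hEdef]
    apply Finset.card_union_of_disjoint
    by_cases hD : D = ∅
    · simp [hD]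
    · rw [borderOf_ne hD]
      exact Finset.disjoint_sdiff
end

section
/- Let K be a field, < a monomial order on the monomials of S = K[X_1,…,X_n], X ⊆ K^n a finite set, and D a finite distinguished order ideal with respect to < such that ev_D^X is surjective. Then the ideal of S generated by I_{D∪∂D}(X) equals I(X); in particular it is a radical ideal. As a consequence (taking a degree-compatible monomial order and D = T_d): if ev_{≤d}^X : S_{≤d} → K^X is surjective, then the ideal generated by I_{≤d+1}(X) is a radical ideal of S. -/
open MvPolynomial
open scoped MonomialOrder

lemma mem_borderOf_of {n : ℕ} {D : Finset (Fin n →₀ ℕ)} (hD : D ≠ ∅) {α : Fin n →₀ ℕ}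
    (hα : α ∈ D) (j : Fin n) (h : α + Finsupp.single j 1 ∉ D) :
    α + Finsupp.single j 1 ∈ borderOf D := by
  classical
  simp only [borderOf, if_neg hD, Finset.mem_sdiff, Finset.mem_biUnion]
  exact ⟨⟨α, hα, Finset.mem_image.2 ⟨j, Finset.mem_univ j, rfl⟩⟩, h⟩

lemma borderOf_not_mem {n : ℕ} {D : Finset (Fin n →₀ ℕ)} (hD : D ≠ ∅) {b : Fin n →₀ ℕ}
    (hb : b ∈ borderOf D) : b ∉ D := by
  classical
  simp only [borderOf, if_neg hD, Finset.mem_sdiff] at hb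
  exact hb.2

lemma fs_degree_add {n : ℕ} (a b : Fin n →₀ ℕ) :
    Finsupp.degree (a + b) = Finsupp.degree a + Finsupp.degree b := by
  simp only [Finsupp.degree_eq_weight_one, map_add]

lemma fs_degree_single {n : ℕ} (j : Fin n) :
    Finsupp.degree (Finsupp.single j 1) = 1 := by
  classical
  exact Finsupp.degree_single j 1

lemma fs_sub_single_add {n : ℕ} {β : Fin n →₀ ℕ} {j : Fin n} (hj : β j ≠ 0) :
    (β - Finsupp.single j 1) + Finsupp.single j 1 = β := by
  classical
  ext i
  rcases eq_or_ne i j with rfl | hij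
  · simp [Nat.sub_add_cancel (Nat.one_le_iff_ne_zero.2 hj)]
  · simp [Finsupp.single_apply, Ne.symm hij]

lemma exists_ne_zero_coord {n : ℕ} {β : Fin n →₀ ℕ} (hβ : β ≠ 0) : ∃ j, β j ≠ 0 := by
  by_contra h
  push_neg at h
  exact hβ (Finsupp.ext h)

lemma exists_border_add {n : ℕ} {D : Finset (Fin n →₀ ℕ)}
    (hOI : ∀ β ∈ D, ∀ α γ : Fin n →₀ ℕ, α + γ = β → α ∈ D) (hD : D ≠ ∅) :
    ∀ β : Fin n →₀ ℕ, β ∉ D → ∃ b ∈ borderOf D, ∃ γ, γ + b = β := by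
  have h0 : (0 : Fin n →₀ ℕ) ∈ D := by
    obtain ⟨δ, hδ⟩ := Finset.nonempty_iff_ne_empty.2 hD
    exact hOI δ hδ 0 δ (zero_add δ)
  have H : ∀ k : ℕ, ∀ β : Fin n →₀ ℕ, Finsupp.degree β ≤ k → β ∉ D →
      ∃ b ∈ borderOf D, ∃ γ, γ + b = β := by
    intro k
    induction k with
    | zero =>
      intro β hk hβ
      have : β = 0 := by
        rw [← Finsupp.degree_eq_zero_iff]; omega
      exact absurd (this ▸ h0) hβ
    | succ k ih =>
      intro β hk hβ
      have hβ0 : β ≠ 0 := fun h => hβ (h ▸ h0)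
      obtain ⟨j, hj⟩ := exists_ne_zero_coord hβ0
      set β' := β - Finsupp.single j 1 with hβ'def
      have hadd : β' + Finsupp.single j 1 = β := fs_sub_single_add hj
      have hdeg : Finsupp.degree β' ≤ k := by
        have := fs_degree_add β' (Finsupp.single j 1)
        rw [hadd, fs_degree_single] at this
        omega
      by_cases hβ'D : β' ∈ D
      · exact ⟨β' + Finsupp.single j 1, mem_borderOf_of hD hβ'D j (by rwa [hadd]), 0,
          by rw [zero_add, hadd]⟩
      · obtain ⟨b, hb, γ', hγ'⟩ := ih β' hdeg hβ'D
        exact ⟨b, hb, γ' + Finsupp.single j 1, by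
          rw [add_right_comm, hγ', hadd]⟩
  exact fun β hβ => H (Finsupp.degree β) β le_rfl hβ

lemma vi_isRadical {K : Type*} [Field K] {n : ℕ} (X : Set (Fin n → K)) :
    (MvPolynomial.vanishingIdeal K X).IsRadical := by
  intro p hp
  obtain ⟨k, hk⟩ := Ideal.mem_radical_iff.1 hp
  rw [mem_vanishingIdeal_iff] at hk ⊢
  intro x hx
  have h := hk x hx
  rw [map_pow] at h
  rcases Nat.eq_zero_or_pos k with rfl | hkpos
  · simp at h
  · exact pow_eq_zero_iff hkpos.ne' |>.1 h

lemma span_eq_vanishing {K : Type*} [Field K] {n : ℕ} (m : MonomialOrder (Fin n))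
    (X : Finset (Fin n → K)) (D : Finset (Fin n →₀ ℕ))
    (hOI : ∀ β ∈ D, ∀ α γ : Fin n →₀ ℕ, α + γ = β → α ∈ D)
    (hDist : ∀ t ∈ D, ∀ s : Fin n →₀ ℕ, s ∉ D → (t ≺[m] s))
    (hsurj : ∀ g : (Fin n → K) → K, ∃ p : MvPolynomial (Fin n) K,
      (∀ β ∈ p.support, β ∈ D) ∧ ∀ x ∈ X, MvPolynomial.eval x p = g x) :
    Ideal.span {p : MvPolynomial (Fin n) K |
          (∀ β ∈ p.support, β ∈ D ∪ borderOf D) ∧ ∀ x ∈ X, MvPolynomial.eval x p = 0}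
        = MvPolynomial.vanishingIdeal K (X : Set (Fin n → K)) := by
  classical
  set J : Set (MvPolynomial (Fin n) K) :=
    {p : MvPolynomial (Fin n) K |
      (∀ β ∈ p.support, β ∈ D ∪ borderOf D) ∧ ∀ x ∈ X, MvPolynomial.eval x p = 0} with hJ
  apply le_antisymm
  · rw [Ideal.span_le]
    rintro p ⟨-, hp⟩
    rw [SetLike.mem_coe, mem_vanishingIdeal_iff]
    exact fun x hx => hp x hx
  · by_cases hX : X = ∅
    · subst hX
      have h1 : (1 : MvPolynomial (Fin n) K) ∈ J := by
        refine ⟨fun β hβ => ?_, fun x hx => absurd hx (Finset.notMem_empty x)⟩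
        have hβ0 : β = 0 := by
          have := mem_support_iff.1 hβ
          rw [coeff_one] at this
          by_cases h : 0 = β
          · exact h.symm
          · simp [h] at this
        subst hβ0
        by_cases hD : D = ∅
        · refine Finset.mem_union_right _ ?_
          simp [borderOf, hD]
        · obtain ⟨δ, hδ⟩ := Finset.nonempty_iff_ne_empty.2 hD
          exact Finset.mem_union_left _ (hOI δ hδ 0 δ (zero_add δ))
      intro p _
      have : Ideal.span J = ⊤ := Ideal.eq_top_iff_one _ |>.2 (Ideal.subset_span h1)
      rw [this]; trivial
    · have hXne := Finset.nonempty_iff_ne_empty.2 hX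
      have hD : D ≠ ∅ := by
        rintro rfl
        obtain ⟨x, hx⟩ := hXne
        obtain ⟨q, hq1, hq2⟩ := hsurj (fun _ => 1)
        have hq0 : q = 0 := support_eq_empty.1
          (Finset.eq_empty_of_forall_notMem fun β hβ => Finset.notMem_empty β (hq1 β hβ))
        have := hq2 x hx
        rw [hq0, map_zero] at this
        exact one_ne_zero this.symm
      have h0D : (0 : Fin n →₀ ℕ) ∈ D := by
        obtain ⟨δ, hδ⟩ := Finset.nonempty_iff_ne_empty.2 hD
        exact hOI δ hδ 0 δ (zero_add δ)
      have key : ∀ s : m.syn, ∀ p : MvPolynomial (Fin n) K,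
          (p.support.sup fun β => m.toSyn β) ≤ s → (∀ x ∈ X, eval x p = 0) →
          p ∈ Ideal.span J := by
        intro s
        induction s using WellFoundedLT.induction with
        | _ s ih =>
        intro p hps hpv
        by_cases hp0 : p = 0
        · simpa [hp0] using Ideal.zero_mem (Ideal.span J)
        obtain ⟨β₀, hβ₀mem, hβ₀⟩ :=
          Finset.exists_mem_eq_sup p.support (support_nonempty.2 hp0) fun β => m.toSyn β
        by_cases hβ₀D : β₀ ∈ D
        · apply Ideal.subset_span
          refine ⟨fun β hβ => Finset.mem_union_left _ ?_, hpv⟩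
          by_contra hβD
          exact absurd (hDist β₀ hβ₀D β hβD)
            (not_lt.2 (hβ₀ ▸ Finset.le_sup (f := fun β => m.toSyn β) hβ))
        · obtain ⟨b, hb, γ, hγ⟩ := exists_border_add hOI hD β₀ hβ₀D
          have hbD : b ∉ D := borderOf_not_mem hD hb
          obtain ⟨q, hq1, hq2⟩ := hsurj (fun x => eval x (monomial b (1 : K)))
          set f : MvPolynomial (Fin n) K := monomial b 1 - q with hfdef
          have hfJ : f ∈ J := by
            constructor
            · intro β hβ
              rcases Finset.mem_union.1 (support_sub _ _ _ hβ) with h | h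
              · have : β = b := by
                  have := mem_support_iff.1 h
                  rw [coeff_monomial] at this
                  by_contra hne
                  simp [Ne.symm hne] at this
                exact Finset.mem_union_right _ (this ▸ hb)
              · exact Finset.mem_union_left _ (hq1 β h)
            · intro x hx
              rw [map_sub, hq2 x hx, sub_self]
          set c := coeff β₀ p with hcdef
          set p' := p - monomial γ c * f with hp'def
          have hp'v : ∀ x ∈ X, eval x p' = 0 := by
            intro x hx
            rw [map_sub, map_mul, hpv x hx, hfJ.2 x hx, mul_zero, sub_zero]
          have hcoeff : coeff β₀ p' = 0 := by
            have h1 : coeff β₀ (monomial γ c * f) = c := by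
              rw [← hγ, coeff_monomial_mul]
              have hcb : coeff b f = 1 := by
                have hcq : coeff b q = 0 := by
                  by_contra h
                  exact hbD (hq1 b (mem_support_iff.2 h))
                rw [hfdef, coeff_sub, coeff_monomial, if_pos rfl, hcq, sub_zero]
              rw [hcb, mul_one]
            rw [hp'def, coeff_sub, h1, ← hcdef, sub_self]
          have hsupp : ∀ δ ∈ p'.support, m.toSyn δ < m.toSyn β₀ := by
            intro δ hδ
            have hδne : δ ≠ β₀ := fun h =>
              mem_support_iff.1 hδ (h ▸ hcoeff)
            have hle : m.toSyn δ ≤ m.toSyn β₀ := by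
              rcases Finset.mem_union.1 (support_sub _ _ _ hδ) with h | h
              · exact hβ₀ ▸ Finset.le_sup (f := fun β => m.toSyn β) h
              · have h2 := mem_support_iff.1 h
                rw [coeff_monomial_mul'] at h2
                split_ifs at h2 with hγδ
                · have hft : (δ - γ) ∈ f.support :=
                    mem_support_iff.2 fun h0 => h2 (by rw [h0, mul_zero])
                  have hδeq : γ + (δ - γ) = δ := add_tsub_cancel_of_le hγδ
                  rcases Finset.mem_union.1 (support_sub _ _ _ hft) with h3 | h3
                  · have hb' : δ - γ = b := by
                      have := mem_support_iff.1 h3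
                      rw [coeff_monomial] at this
                      by_contra hne
                      simp [Ne.symm hne] at this
                    rw [← hγ, ← hδeq, hb']
                  · have hlt : m.toSyn (δ - γ) < m.toSyn b := hDist _ (hq1 _ h3) b hbD
                    calc m.toSyn δ = m.toSyn γ + m.toSyn (δ - γ) := by
                          rw [← map_add, hδeq]
                      _ ≤ m.toSyn γ + m.toSyn b := le_of_lt (add_lt_add_right hlt _)
                      _ = m.toSyn β₀ := by rw [← map_add, hγ]
                · exact absurd rfl h2
            exact lt_of_le_of_ne hle fun h => hδne (m.toSyn.injective h)
          have hβ₀0 : β₀ ≠ 0 := fun h => hβ₀D (h ▸ h0D)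
          have hpos : (⊥ : m.syn) < m.toSyn β₀ := by
            rw [MonomialOrder.bot_eq_zero]
            refine lt_of_le_of_ne ?_ fun h => hβ₀0 (m.toSyn.injective (by rw [← h, map_zero]))
            rw [← MonomialOrder.bot_eq_zero]; exact bot_le
          have hs' : (p'.support.sup fun β => m.toSyn β) < m.toSyn β₀ :=
            (Finset.sup_lt_iff hpos).2 hsupp
          have hβ₀s : m.toSyn β₀ ≤ s := hβ₀ ▸ hps
          have hmem' : p' ∈ Ideal.span J :=
            ih _ (lt_of_lt_of_le hs' hβ₀s) p' le_rfl hp'v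
          have hpeq : p = p' + monomial γ c * f := by rw [hp'def]; ring
          rw [hpeq]
          exact Ideal.add_mem _ hmem' (Ideal.mul_mem_left _ _ (Ideal.subset_span hfJ))
      intro p hp
      rw [mem_vanishingIdeal_iff] at hp
      exact key _ p le_rfl fun x hx => hp x (Finset.mem_coe.2 hx)

lemma exists_split {n : ℕ} : ∀ (k : ℕ) (β : Fin n →₀ ℕ), k ≤ Finsupp.degree β →
    ∃ β₁ β₂ : Fin n →₀ ℕ, β₁ + β₂ = β ∧ Finsupp.degree β₂ = k := by
  intro k
  induction k with
  | zero => exact fun β _ => ⟨β, 0, add_zero β, map_zero _⟩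
  | succ k ih =>
    intro β hk
    obtain ⟨β₁, β₂, hadd, hdeg⟩ := ih β (by omega)
    have hdd : Finsupp.degree β₁ + Finsupp.degree β₂ = Finsupp.degree β := by
      rw [← fs_degree_add, hadd]
    have hβ₁ : β₁ ≠ 0 := by
      rintro rfl
      rw [map_zero] at hdd
      omega
    obtain ⟨j, hj⟩ := exists_ne_zero_coord hβ₁
    refine ⟨β₁ - Finsupp.single j 1, β₂ + Finsupp.single j 1, ?_, ?_⟩
    · calc β₁ - Finsupp.single j 1 + (β₂ + Finsupp.single j 1)
          = (β₁ - Finsupp.single j 1 + Finsupp.single j 1) + β₂ := by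
            rw [add_comm β₂, ← add_assoc]
        _ = β₁ + β₂ := by rw [fs_sub_single_add hj]
        _ = β := hadd
    · rw [fs_degree_add, fs_degree_single, hdeg]

lemma fs_degree_eq_sum {n : ℕ} (β : Fin n →₀ ℕ) :
    (β.sum fun _ e => e) = Finsupp.degree β := rfl

lemma fs_degree_eq_sum' {n : ℕ} (β : Fin n →₀ ℕ) :
    (β.sum fun _ => id) = Finsupp.degree β := rfl

lemma red_all {K : Type*} [Field K] {n : ℕ} (X : Finset (Fin n → K)) (d : ℕ)
    (hs : ∀ g : (Fin n → K) → K, ∃ p : MvPolynomial (Fin n) K,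
      p.totalDegree ≤ d ∧ ∀ x ∈ X, MvPolynomial.eval x p = g x) :
    ∀ (e : ℕ) (p : MvPolynomial (Fin n) K), p.totalDegree ≤ e →
      ∃ r : MvPolynomial (Fin n) K, r.totalDegree ≤ d ∧
        p - r ∈ Ideal.span {p : MvPolynomial (Fin n) K |
          p.totalDegree ≤ d + 1 ∧ ∀ x ∈ X, MvPolynomial.eval x p = 0} := by
  classical
  set J : Set (MvPolynomial (Fin n) K) :=
    {p : MvPolynomial (Fin n) K | p.totalDegree ≤ d + 1 ∧ ∀ x ∈ X, MvPolynomial.eval x p = 0}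
  intro e
  induction e using Nat.strong_induction_on with
  | _ e ih =>
  intro p hp
  by_cases he : e ≤ d
  · exact ⟨p, hp.trans he, by simpa using Ideal.zero_mem (Ideal.span J)⟩
  · push_neg at he
    have mono : ∀ β : Fin n →₀ ℕ, ∃ q : MvPolynomial (Fin n) K,
        β ∈ p.support → q.totalDegree ≤ e - 1 ∧
          monomial β (coeff β p) - q ∈ Ideal.span J := by
      intro β
      by_cases hβ : β ∈ p.support
      · by_cases hdeg : Finsupp.degree β ≤ e - 1
        · exact ⟨monomial β (coeff β p), fun _ =>
            ⟨(totalDegree_monomial_le _ _).trans (by rw [fs_degree_eq_sum']; exact hdeg),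
             by simp⟩⟩
        · push_neg at hdeg
          have hdegβ : Finsupp.degree β ≤ e := by
            rw [← fs_degree_eq_sum]
            exact (le_totalDegree hβ).trans hp
          obtain ⟨β₁, β₂, hadd, hdeg2⟩ := exists_split (d + 1) β (by omega)
          obtain ⟨r₂, hr₂d, hr₂⟩ := hs (fun x => eval x (monomial β₂ (1 : K)))
          refine ⟨monomial β₁ (coeff β p) * r₂, fun _ => ⟨?_, ?_⟩⟩
          · refine le_trans (totalDegree_mul _ _) ?_
            have h1 : (monomial β₁ (coeff β p)).totalDegree ≤ Finsupp.degree β₁ := by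
              rw [← fs_degree_eq_sum']; exact totalDegree_monomial_le _ _
            have h2 : Finsupp.degree β₁ + (d + 1) = Finsupp.degree β := by
              rw [← hadd, fs_degree_add, hdeg2]
            omega
          · have heq : monomial β (coeff β p) - monomial β₁ (coeff β p) * r₂
                = monomial β₁ (coeff β p) * (monomial β₂ 1 - r₂) := by
              rw [mul_sub, monomial_mul, hadd, mul_one]
            rw [heq]
            refine Ideal.mul_mem_left _ _ (Ideal.subset_span ⟨?_, ?_⟩)
            · refine le_trans (totalDegree_sub _ _) (max_le ?_ (hr₂d.trans (by omega)))
              refine (totalDegree_monomial_le _ _).trans ?_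
              rw [fs_degree_eq_sum', hdeg2]
            · intro x hx
              rw [map_sub, hr₂ x hx, sub_self]
      · exact ⟨0, fun h => absurd h hβ⟩
    choose q hq using mono
    set r₁ : MvPolynomial (Fin n) K := ∑ β ∈ p.support, q β with hr₁def
    have hps : p - r₁ ∈ Ideal.span J := by
      have heq : p - r₁ = ∑ β ∈ p.support, (monomial β (coeff β p) - q β) := by
        rw [Finset.sum_sub_distrib, support_sum_monomial_coeff, hr₁def]
      rw [heq]
      exact Ideal.sum_mem _ fun β hβ => (hq β hβ).2
    have hr₁ : r₁.totalDegree ≤ e - 1 :=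
      (totalDegree_finset_sum _ _).trans (Finset.sup_le fun β hβ => (hq β hβ).1)
    obtain ⟨r, hrd, hr⟩ := ih (e - 1) (by omega) r₁ hr₁
    refine ⟨r, hrd, ?_⟩
    have heq : p - r = (p - r₁) + (r₁ - r) := by ring
    rw [heq]
    exact Ideal.add_mem _ hps hr

lemma span_deg_eq_vanishing {K : Type*} [Field K] {n : ℕ} (X : Finset (Fin n → K)) (d : ℕ)
    (hs : ∀ g : (Fin n → K) → K, ∃ p : MvPolynomial (Fin n) K,
      p.totalDegree ≤ d ∧ ∀ x ∈ X, MvPolynomial.eval x p = g x) :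
    Ideal.span {p : MvPolynomial (Fin n) K |
        p.totalDegree ≤ d + 1 ∧ ∀ x ∈ X, MvPolynomial.eval x p = 0}
      = MvPolynomial.vanishingIdeal K (X : Set (Fin n → K)) := by
  classical
  set J : Set (MvPolynomial (Fin n) K) :=
    {p : MvPolynomial (Fin n) K | p.totalDegree ≤ d + 1 ∧ ∀ x ∈ X, MvPolynomial.eval x p = 0}
    with hJdef
  have hsub : Ideal.span J ≤ MvPolynomial.vanishingIdeal K (X : Set (Fin n → K)) := by
    rw [Ideal.span_le]
    rintro p ⟨-, hp⟩
    rw [SetLike.mem_coe, mem_vanishingIdeal_iff]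
    exact fun x hx => hp x hx
  refine le_antisymm hsub ?_
  intro p hp
  rw [mem_vanishingIdeal_iff] at hp
  obtain ⟨r, hrd, hr⟩ := red_all X d hs p.totalDegree p le_rfl
  have hrv : ∀ x ∈ X, eval x r = 0 := by
    intro x hx
    have h1 : eval x (p - r) = 0 := by
      have := hsub hr
      rw [mem_vanishingIdeal_iff] at this
      exact this x (Finset.mem_coe.2 hx)
    rw [map_sub, (by simpa using hp x (Finset.mem_coe.2 hx) : eval x p = 0), zero_sub, neg_eq_zero] at h1
    exact h1
  have hrmem : r ∈ Ideal.span J := Ideal.subset_span ⟨hrd.trans (by omega), hrv⟩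
  have heq : p = (p - r) + r := by ring
  rw [heq]
  exact Ideal.add_mem _ hr hrmem

/-- Let `m` be a monomial order, `X ⊆ K^n` finite, and `D` a finite
distinguished order ideal such that `ev_D^X` is surjective.  Then the ideal generated by
`I_{D∪∂D}(X)` equals the vanishing ideal `I(X)`; in particular it is radical.  As a
consequence (for a degree-compatible order and `D = T_d`): for every `d`, if
`ev_{≤d}^X : S_{≤d} → K^X` is surjective, then the ideal generated by `I_{≤d+1}(X)` is a
radical ideal of `S`. -/
theorem stmt9 (K : Type*) [Field K] (n : ℕ) (m : MonomialOrder (Fin n))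
    (X : Finset (Fin n → K)) (D : Finset (Fin n →₀ ℕ))
    (hOI : ∀ β ∈ D, ∀ α γ : Fin n →₀ ℕ, α + γ = β → α ∈ D)
    (hDist : ∀ t ∈ D, ∀ s : Fin n →₀ ℕ, s ∉ D → (t ≺[m] s))
    (hsurj : ∀ g : (Fin n → K) → K, ∃ p : MvPolynomial (Fin n) K,
      (∀ β ∈ p.support, β ∈ D) ∧ ∀ x ∈ X, MvPolynomial.eval x p = g x) :
    (Ideal.span {p : MvPolynomial (Fin n) K |
          (∀ β ∈ p.support, β ∈ D ∪ borderOf D) ∧ ∀ x ∈ X, MvPolynomial.eval x p = 0}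
        = MvPolynomial.vanishingIdeal K (X : Set (Fin n → K)) ∧
      (Ideal.span {p : MvPolynomial (Fin n) K |
          (∀ β ∈ p.support, β ∈ D ∪ borderOf D) ∧
          ∀ x ∈ X, MvPolynomial.eval x p = 0}).IsRadical) ∧
    ∀ d : ℕ,
      (∀ g : (Fin n → K) → K, ∃ p : MvPolynomial (Fin n) K,
        p.totalDegree ≤ d ∧ ∀ x ∈ X, MvPolynomial.eval x p = g x) →
      (Ideal.span {p : MvPolynomial (Fin n) K |
          p.totalDegree ≤ d + 1 ∧ ∀ x ∈ X, MvPolynomial.eval x p = 0}).IsRadical := by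
  have h1 := span_eq_vanishing m X D hOI hDist hsurj
  refine ⟨⟨h1, h1 ▸ vi_isRadical _⟩, fun d hd => ?_⟩
  have h2 := span_deg_eq_vanishing X d hd
  exact h2 ▸ vi_isRadical _
end

section
/- (Prony structure for Chebyshev exponential sums) Let K be a field of characteristic zero, let b_1,…,b_r ∈ K be pairwise distinct, μ_1,…,μ_r ∈ K \ {0}, and define f : ℕ → K by f(i) := Σ_{k=1}^r μ_k·T_i(b_k), where T_i denotes the i-th Chebyshev polynomial of the first kind. For d ∈ ℕ let P'_d(f) : K^{d+1} → K^d be the linear map sending c = (c_0,…,c_d) to the vector whose i-th entry (i = 0,…,d−1) is Σ_{j=0}^d c_j·(f(i+j) + f(|i−j|)). Then for all sufficiently large d, ker P'_d(f) = {c ∈ K^{d+1} : Σ_{j=0}^d c_j·T_j(b_k) = 0 for all k = 1,…,r}; in particular, the set of common zeros in K of the polynomials Σ_{j=0}^d c_j·T_j(Y), as c ranges over ker P'_d(f), equals {b_1,…,b_r}. -/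
open Polynomial Polynomial.Chebyshev

section ChebAux

variable {K : Type*} [Field K] [CharZero K]

private lemma cheb_deg_le : ∀ n : ℕ, (T K (n:ℤ)).natDegree ≤ n := by
  intro n
  induction n using Nat.strong_induction_on with
  | _ n IH =>
    match n with
    | 0 => simp [T_zero]
    | 1 => simp [T_one]
    | (m+2) =>
      have h : T K ((m+2:ℕ):ℤ) = 2 * X * T K ((m+1:ℕ):ℤ) - T K (m:ℤ) := by
        push_cast
        simpa using T_add_two K (m:ℤ)
      rw [h]
      refine le_trans (natDegree_sub_le _ _) ?_
      have h1 : (2 * X * T K ((m+1:ℕ):ℤ)).natDegree ≤ m + 2 := by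
        refine le_trans (natDegree_mul_le) ?_
        have : ((2 * X : K[X])).natDegree ≤ 1 := by
          refine le_trans (natDegree_mul_le) ?_
          simp
        have := IH (m+1) (by omega)
        omega
      have h2 := IH m (by omega)
      omega

private lemma cheb_coeff : ∀ n : ℕ, (T K ((n+1:ℕ):ℤ)).coeff (n+1) = 2 ^ n := by
  intro n
  induction n with
  | zero => simp [T_one]
  | succ m IH =>
    have h : T K ((m+2:ℕ):ℤ) = 2 * X * T K ((m+1:ℕ):ℤ) - T K (m:ℤ) := by
      push_cast
      simpa using T_add_two K (m:ℤ)
    rw [h, coeff_sub, coeff_eq_zero_of_natDegree_lt (lt_of_le_of_lt (cheb_deg_le m) (by omega))]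
    have : (2 * X * T K ((m+1:ℕ):ℤ)) = 2 * (X * T K ((m+1:ℕ):ℤ)) := by ring
    rw [this]
    simp only [coeff_ofNat_mul, coeff_X_mul]
    rw [IH]
    ring

private lemma pow_mem_span (d : ℕ) : ∀ n : ℕ, n ≤ d →
    (X:K[X])^n ∈ Submodule.span K (Set.range fun j : Fin (d+1) => T K ((j:ℕ):ℤ)) := by
  intro n
  induction n using Nat.strong_induction_on with
  | _ n IH =>
    intro hn
    match n with
    | 0 =>
      have : (X:K[X])^0 = T K (((⟨0, by omega⟩ : Fin (d+1)):ℕ):ℤ) := by simp [T_zero]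
      rw [this]
      exact Submodule.subset_span ⟨_, rfl⟩
    | (m+1) =>
      set a : K := 2 ^ m with ha
      have ha0 : a ≠ 0 := by
        rw [ha]; exact pow_ne_zero _ two_ne_zero
      set q : K[X] := T K ((m+1:ℕ):ℤ) - C a * X^(m+1) with hq
      have hqc : ∀ l : ℕ, m + 1 ≤ l → q.coeff l = 0 := by
        intro l hl
        rcases eq_or_lt_of_le hl with h | h
        · rw [hq, coeff_sub, ← h, cheb_coeff m, coeff_C_mul, coeff_X_pow]
          simp [ha]
        · rw [hq, coeff_sub, coeff_eq_zero_of_natDegree_lt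
            (lt_of_le_of_lt (cheb_deg_le (m+1)) h), coeff_C_mul, coeff_X_pow,
            if_neg (by omega)]
          ring
      have hqdeg : q.natDegree < m + 1 := by
        by_cases h0 : q = 0
        · simp [h0]
        · have := (degree_lt_iff_coeff_zero q (m+1)).mpr (by intro l hl; exact hqc l (by exact_mod_cast hl))
          exact (natDegree_lt_iff_degree_lt h0).mpr (by exact_mod_cast this)
      have hqmem : q ∈ Submodule.span K (Set.range fun j : Fin (d+1) => T K ((j:ℕ):ℤ)) := by
        rw [q.as_sum_range' (m+1) hqdeg]
        refine Submodule.sum_mem _ ?_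
        intro i hi
        simp only [Finset.mem_range] at hi
        rw [← smul_X_eq_monomial]
        exact Submodule.smul_mem _ _ (IH i (by omega) (by omega))
      have hT : T K ((m+1:ℕ):ℤ) ∈ Submodule.span K (Set.range fun j : Fin (d+1) => T K ((j:ℕ):ℤ)) :=
        Submodule.subset_span ⟨⟨m+1, by omega⟩, rfl⟩
      have : (X:K[X])^(m+1) = a⁻¹ • (T K ((m+1:ℕ):ℤ) - q) := by
        rw [hq, sub_sub_cancel, smul_eq_C_mul, ← mul_assoc, ← Polynomial.C_mul, inv_mul_cancel₀ ha0,
          C_1, one_mul]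
      rw [this]
      exact Submodule.smul_mem _ _ (Submodule.sub_mem _ hT hqmem)

private lemma exists_coeffs (d : ℕ) (p : K[X]) (hp : p.natDegree ≤ d) :
    ∃ c : Fin (d+1) → K, p = ∑ j : Fin (d+1), c j • T K ((j:ℕ):ℤ) := by
  have hmem : p ∈ Submodule.span K (Set.range fun j : Fin (d+1) => T K ((j:ℕ):ℤ)) := by
    rw [p.as_sum_range' (d+1) (by omega)]
    refine Submodule.sum_mem _ ?_
    intro i hi
    simp only [Finset.mem_range] at hi
    rw [← smul_X_eq_monomial]
    exact Submodule.smul_mem _ _ (pow_mem_span d i (by omega))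
  obtain ⟨c, hc⟩ := (Finsupp.mem_span_range_iff_exists_finsupp).mp hmem
  exact ⟨c, by rw [← hc]; simp [Finsupp.sum_fintype]⟩

private lemma cheb_indep {r : ℕ} (b : Fin r → K) (hb : Function.Injective b) (a : Fin r → K)
    (h : ∀ i : Fin r, ∑ k, a k * (T K ((i:ℕ):ℤ)).eval (b k) = 0) : a = 0 := by
  have hv : ∀ n : Fin r, ∑ k, a k * b k ^ (n:ℕ) = 0 := by
    intro n
    obtain ⟨c, hc⟩ := exists_coeffs (n:ℕ) ((X:K[X])^(n:ℕ)) (by simp)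
    have heval : ∀ k, b k ^ (n:ℕ) = ∑ j : Fin ((n:ℕ)+1), c j * (T K ((j:ℕ):ℤ)).eval (b k) := by
      intro k
      have := congrArg (eval (b k)) hc
      simpa [eval_finset_sum] using this
    calc ∑ k, a k * b k ^ (n:ℕ)
        = ∑ k, ∑ j : Fin ((n:ℕ)+1), c j * (a k * (T K ((j:ℕ):ℤ)).eval (b k)) := by
          refine Finset.sum_congr rfl fun k _ => ?_
          rw [heval k, Finset.mul_sum]
          refine Finset.sum_congr rfl fun j _ => by ring
      _ = ∑ j : Fin ((n:ℕ)+1), c j * ∑ k, a k * (T K ((j:ℕ):ℤ)).eval (b k) := by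
          rw [Finset.sum_comm]
          exact Finset.sum_congr rfl fun j _ => by rw [Finset.mul_sum]
      _ = 0 := by
          refine Finset.sum_eq_zero fun j _ => ?_
          have hj : (j:ℕ) < r := by omega
          rw [show ((j:ℕ):ℤ) = (((⟨(j:ℕ), hj⟩ : Fin r):ℕ):ℤ) from rfl, h ⟨(j:ℕ), hj⟩, mul_zero]
  have hdet : (Matrix.vandermonde b).det ≠ 0 := Matrix.det_vandermonde_ne_zero_iff.mpr hb
  refine Matrix.eq_zero_of_vecMul_eq_zero hdet ?_
  funext n
  simpa [Matrix.vecMul, Matrix.vandermonde, dotProduct] using hv n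

private lemma cheb_key (i j : ℕ) :
    T K ((i+j : ℕ):ℤ) + T K ((Nat.dist i j : ℕ):ℤ) = 2 * T K (i:ℤ) * T K (j:ℤ) := by
  rw [T_mul_T K (i:ℤ) (j:ℤ)]
  have h1 : Nat.dist i j = ((i:ℤ) - (j:ℤ)).natAbs := by
    rw [Nat.dist]; omega
  rw [h1]
  push_cast
  rw [Int.abs_eq_natAbs, T_natAbs]

end ChebAux


/-- Prony structure for Chebyshev exponential sums, Lakshman–Saunders.
Let `K` be a field of characteristic zero, `b_1,…,b_r ∈ K` pairwise distinct,
`μ_1,…,μ_r ∈ K\{0}`, and `f(i) := Σ_k μ_k·T_i(b_k)` with `T_i` the Chebyshev polynomials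
of the first kind.  Let `P'_d(f) : K^{d+1} → K^d` send `c` to
`(Σ_{j=0}^d c_j·(f(i+j)+f(|i−j|)))_{i=0,…,d−1}`.  Then for all sufficiently large `d`,
`ker P'_d(f) = {c | Σ_j c_j·T_j(b_k) = 0 for all k}`; in particular the set of common
zeros of the polynomials `Σ_j c_j·T_j(Y)`, `c ∈ ker P'_d(f)`, equals `{b_1,…,b_r}`. -/
theorem stmt17 (K : Type*) [Field K] [CharZero K]
    (r : ℕ) (b : Fin r → K) (hb : Function.Injective b)
    (μ : Fin r → K) (hμ : ∀ k, μ k ≠ 0)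
    (f : ℕ → K)
    (hf : ∀ i : ℕ, f i = ∑ k, μ k * (Polynomial.Chebyshev.T K (i : ℤ)).eval (b k)) :
    ∃ N, ∀ d ≥ N,
      (∀ c : Fin (d + 1) → K,
        (∀ i : Fin d,
            ∑ j : Fin (d + 1),
              c j * (f ((i : ℕ) + (j : ℕ)) + f (Nat.dist (i : ℕ) (j : ℕ))) = 0)
          ↔ ∀ k,
              ∑ j : Fin (d + 1),
                c j * (Polynomial.Chebyshev.T K ((j : ℕ) : ℤ)).eval (b k) = 0) ∧
      {x : K | ∀ c : Fin (d + 1) → K,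
          (∀ i : Fin d,
            ∑ j : Fin (d + 1),
              c j * (f ((i : ℕ) + (j : ℕ)) + f (Nat.dist (i : ℕ) (j : ℕ))) = 0) →
          ∑ j : Fin (d + 1),
            c j * (Polynomial.Chebyshev.T K ((j : ℕ) : ℤ)).eval x = 0}
        = Set.range b := by
  refine ⟨r, fun d hd => ?_⟩
  -- the key entry computation
  have hentry : ∀ (c : Fin (d+1) → K) (i : ℕ),
      ∑ j : Fin (d+1), c j * (f (i + (j:ℕ)) + f (Nat.dist i (j:ℕ)))
      = 2 * ∑ k, μ k * (T K (i:ℤ)).eval (b k) *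
          (∑ j : Fin (d+1), c j * (T K ((j:ℕ):ℤ)).eval (b k)) := by
    intro c i
    have step : ∀ j : Fin (d+1),
        f (i + (j:ℕ)) + f (Nat.dist i (j:ℕ))
        = ∑ k, 2 * (μ k * (T K (i:ℤ)).eval (b k) * (T K (((j:ℕ)):ℤ)).eval (b k)) := by
      intro j
      rw [hf, hf, ← Finset.sum_add_distrib]
      refine Finset.sum_congr rfl fun k _ => ?_
      have hkey := congrArg (eval (b k)) (cheb_key (K := K) i (j:ℕ))
      simp only [eval_add, eval_mul, eval_ofNat] at hkey
      linear_combination μ k * hkey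
    calc ∑ j : Fin (d+1), c j * (f (i + (j:ℕ)) + f (Nat.dist i (j:ℕ)))
        = ∑ j : Fin (d+1), ∑ k,
            2 * (μ k * (T K (i:ℤ)).eval (b k)) * (c j * (T K ((j:ℕ):ℤ)).eval (b k)) := by
          refine Finset.sum_congr rfl fun j _ => ?_
          rw [step j, Finset.mul_sum]
          exact Finset.sum_congr rfl fun k _ => by ring
      _ = ∑ k, 2 * (μ k * (T K (i:ℤ)).eval (b k)) *
            (∑ j : Fin (d+1), c j * (T K ((j:ℕ):ℤ)).eval (b k)) := by
          rw [Finset.sum_comm]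
          exact Finset.sum_congr rfl fun k _ => by rw [Finset.mul_sum]
      _ = 2 * ∑ k, μ k * (T K (i:ℤ)).eval (b k) *
            (∑ j : Fin (d+1), c j * (T K ((j:ℕ):ℤ)).eval (b k)) := by
          rw [Finset.mul_sum]
          exact Finset.sum_congr rfl fun k _ => by ring
  have h1 : ∀ c : Fin (d + 1) → K,
      (∀ i : Fin d,
          ∑ j : Fin (d + 1),
            c j * (f ((i : ℕ) + (j : ℕ)) + f (Nat.dist (i : ℕ) (j : ℕ))) = 0)
        ↔ ∀ k, ∑ j : Fin (d + 1), c j * (T K ((j : ℕ) : ℤ)).eval (b k) = 0 := by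
    intro c
    constructor
    · intro h k
      have ha := cheb_indep b hb
        (fun k => μ k * ∑ j : Fin (d+1), c j * (T K ((j:ℕ):ℤ)).eval (b k)) ?_
      · have := congrFun ha k
        simp only [Pi.zero_apply] at this
        exact (mul_eq_zero.mp this).resolve_left (hμ k)
      · intro i
        have hid : (i:ℕ) < d := lt_of_lt_of_le i.2 hd
        have hh := h ⟨(i:ℕ), hid⟩
        rw [hentry c (i:ℕ)] at hh
        have h2 : (2:K) ≠ 0 := two_ne_zero
        have := (mul_eq_zero.mp hh).resolve_left h2
        rw [← this]
        exact Finset.sum_congr rfl fun k _ => by ring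
    · intro hS i
      rw [hentry c (i:ℕ)]
      rw [Finset.sum_eq_zero fun k _ => by rw [hS k, mul_zero], mul_zero]
  refine ⟨h1, ?_⟩
  ext x
  simp only [Set.mem_setOf_eq]
  constructor
  · intro hx
    by_contra hxr
    set p : K[X] := ∏ k, (X - C (b k)) with hp
    have hpd : p.natDegree ≤ d := by
      refine le_trans (Polynomial.natDegree_prod_le Finset.univ _) (le_trans ?_ hd)
      have : ∑ k : Fin r, (X - C (b k)).natDegree = ∑ k : Fin r, 1 :=
        Finset.sum_congr rfl fun k _ => natDegree_X_sub_C (b k)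
      rw [this]
      simp
    obtain ⟨c, hc⟩ := exists_coeffs d p hpd
    have hceval : ∀ y : K, p.eval y = ∑ j : Fin (d+1), c j * (T K ((j:ℕ):ℤ)).eval y := by
      intro y
      rw [hc]
      simp [eval_finset_sum]
    have hker : ∀ i : Fin d,
        ∑ j : Fin (d + 1),
          c j * (f ((i : ℕ) + (j : ℕ)) + f (Nat.dist (i : ℕ) (j : ℕ))) = 0 := by
      refine (h1 c).mpr fun k => ?_
      rw [← hceval (b k), hp, eval_prod]
      exact Finset.prod_eq_zero (Finset.mem_univ k) (by simp)
    have hzero := hx c hker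
    rw [← hceval x, hp, eval_prod] at hzero
    obtain ⟨k, _, hk⟩ := Finset.prod_eq_zero_iff.mp hzero
    simp only [eval_sub, eval_X, eval_C, sub_eq_zero] at hk
    exact hxr ⟨k, hk.symm⟩
  · rintro ⟨k, rfl⟩ c hcker
    exact (h1 c).mp hcker k
end

section
/- (Prony structure for Gaussian sums) Let A ∈ ℝ^{n×n} be a symmetric positive definite matrix. For t ∈ ℝ^n define the Gaussian g_{A,t} : ℝ^n → ℝ by g_{A,t}(x) := exp(−(x−t)^T A (x−t)), and set b_{A,t} := (e^{2(At)_1},…,e^{2(At)_n}) ∈ (ℝ\{0})^n. Then: (a) the map ℝ^n → ℝ^n, t ↦ b_{A,t}, is injective; (b) for every finite set T ⊆ ℝ^n and coefficients μ_t ∈ ℂ \ {0} (t ∈ T), the function g := Σ_{t∈T} μ_t·g_{A,t} satisfies, for all α ∈ ℤ^n, g(α)·e^{α^T A α} = Σ_{t∈T} μ_t·e^{−t^T A t}·(b_{A,t})^α; i.e., f_g : ℤ^n → ℂ, α ↦ g(α)·e^{α^T A α}, is an exponential sum with domain ℤ^n whose set of pairwise distinct base points is {b_{A,t} : t ∈ T}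 and whose coefficients μ_t·e^{−t^T A t} are all nonzero; (c) consequently, the Gaussians {g_{A,t} : t ∈ ℝ^n} are ℂ-linearly independent (as functions ℝ^n → ℂ). -/
open Matrix

/-- The Gaussian `g_{A,t}(x) = exp(−(x−t)ᵀA(x−t))`. -/
noncomputable def gaussian (n : ℕ) (A : Matrix (Fin n) (Fin n) ℝ)
    (t : Fin n → ℝ) (x : Fin n → ℝ) : ℝ :=
  Real.exp (-((x - t) ⬝ᵥ A.mulVec (x - t)))

variable {n : ℕ} {A : Matrix (Fin n) (Fin n) ℝ}

lemma symm_dot (hA : A.PosDef) (t a : Fin n → ℝ) :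
    t ⬝ᵥ A.mulVec a = a ⬝ᵥ A.mulVec t := by
  rw [Matrix.dotProduct_mulVec, dotProduct_comm, ← Matrix.mulVec_transpose,
    ← Matrix.conjTranspose_eq_transpose_of_trivial, hA.1.eq]

lemma inj' (hA : A.PosDef) : Function.Injective
    (fun (t : Fin n → ℝ) => fun j => Real.exp (2 * A.mulVec t j)) := by
  intro t s h
  have h2 : ∀ j, A.mulVec t j = A.mulVec s j := by
    intro j
    have := Real.exp_eq_exp.mp (congrFun h j)
    linarith
  by_contra hne
  have hts : t - s ≠ 0 := sub_ne_zero.mpr hne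
  have hpos := hA.dotProduct_mulVec_pos hts
  have hz : A.mulVec (t - s) = 0 := by
    funext j; simp [Matrix.mulVec_sub, h2 j]
  rw [hz] at hpos
  simp at hpos

lemma quad (hA : A.PosDef) (t a : Fin n → ℝ) :
    (a - t) ⬝ᵥ A.mulVec (a - t)
      = a ⬝ᵥ A.mulVec a - 2 * (a ⬝ᵥ A.mulVec t) + t ⬝ᵥ A.mulVec t := by
  rw [Matrix.mulVec_sub, sub_dotProduct, dotProduct_sub, dotProduct_sub,
    symm_dot hA t a]
  ring

lemma prod_eq (t : Fin n → ℝ) (α : Fin n → ℤ) :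
    (∏ j, ((Real.exp (2 * A.mulVec t j) : ℂ) ^ α j))
      = Complex.exp ((2 * ((fun j => (α j : ℝ)) ⬝ᵥ A.mulVec t) : ℝ) : ℂ) := by
  have h1 : ∀ j, ((Real.exp (2 * A.mulVec t j) : ℂ) ^ α j)
      = Complex.exp ((α j : ℂ) * ((2 * A.mulVec t j : ℝ) : ℂ)) := by
    intro j
    rw [Complex.ofReal_exp, ← Complex.exp_int_mul]
  simp_rw [h1, ← Complex.exp_sum]
  congr 1
  push_cast
  simp [dotProduct, Finset.mul_sum]
  exact Finset.sum_congr rfl fun x _ => by ring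

lemma term_eq (hA : A.PosDef) (t : Fin n → ℝ) (α : Fin n → ℤ) :
    (gaussian n A t (fun j => (α j : ℝ)) : ℂ) *
      (Real.exp ((fun j => (α j : ℝ)) ⬝ᵥ A.mulVec (fun j => (α j : ℝ))) : ℂ)
    = (Real.exp (-(t ⬝ᵥ A.mulVec t)) : ℂ) *
        ∏ j, ((Real.exp (2 * A.mulVec t j) : ℂ) ^ α j) := by
  rw [prod_eq, gaussian]
  set a : Fin n → ℝ := fun j => (α j : ℝ)
  rw [Complex.ofReal_exp, Complex.ofReal_exp, Complex.ofReal_exp,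
    ← Complex.exp_add, ← Complex.exp_add]
  congr 1
  rw [quad hA t a]
  push_cast
  ring

noncomputable def chi (A : Matrix (Fin n) (Fin n) ℝ) (t : Fin n → ℝ) :
    Multiplicative (Fin n → ℤ) →* ℂ where
  toFun α := ∏ j, ((Real.exp (2 * A.mulVec t j) : ℂ) ^ (Multiplicative.toAdd α) j)
  map_one' := by simp
  map_mul' x y := by
    simp only [toAdd_mul, Pi.add_apply]
    rw [← Finset.prod_mul_distrib]
    exact Finset.prod_congr rfl fun j _ =>
      zpow_add₀ (Complex.ofReal_ne_zero.mpr (Real.exp_ne_zero _)) _ _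

lemma prod_single (b : Fin n → ℂ) (j : Fin n) :
    (∏ j', b j' ^ ((Pi.single j 1 : Fin n → ℤ) j')) = b j := by
  rw [Finset.prod_eq_single j]
  · simp
  · intro j' _ hj'; simp [Pi.single_apply, hj']
  · simp

lemma chi_inj (hA : A.PosDef) : Function.Injective (chi A) := by
  intro t s h
  apply inj' hA
  funext j
  have := congrFun (congrArg (fun f => f.toFun) h) (Multiplicative.ofAdd (Pi.single j 1))
  simp only [chi, MonoidHom.coe_mk, OneHom.coe_mk, toAdd_ofAdd] at this
  rw [prod_single, prod_single] at this
  exact_mod_cast this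

/-- Prony structure for Gaussian sums, Peter–Plonka–Schaback.  Let `A` be
symmetric positive definite, `g_{A,t}(x) := exp(−(x−t)ᵀA(x−t))` and
`b_{A,t} := (e^{2(At)_1},…,e^{2(At)_n})`.  Then (a) `t ↦ b_{A,t}` is injective;
(b) for every finite `T ⊆ ℝ^n` and nonzero `μ_t ∈ ℂ`, `g := Σ_t μ_t·g_{A,t}` satisfies
`g(α)·e^{αᵀAα} = Σ_t μ_t·e^{−tᵀAt}·(b_{A,t})^α` for all `α ∈ ℤ^n`, an exponential sum
with nonzero coefficients `μ_t·e^{−tᵀAt}`; (c) the Gaussians are `ℂ`-linearly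
independent. -/
theorem stmt19 (n : ℕ) (A : Matrix (Fin n) (Fin n) ℝ) (hA : A.PosDef) :
    Function.Injective
      (fun (t : Fin n → ℝ) => fun j => Real.exp (2 * A.mulVec t j)) ∧
    (∀ (T : Finset (Fin n → ℝ)) (μ : (Fin n → ℝ) → ℂ), (∀ t ∈ T, μ t ≠ 0) →
      (∀ α : Fin n → ℤ,
        (∑ t ∈ T, μ t * (gaussian n A t (fun j => (α j : ℝ)) : ℂ)) *
            (Real.exp ((fun j => (α j : ℝ)) ⬝ᵥ A.mulVec (fun j => (α j : ℝ))) : ℂ)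
          = ∑ t ∈ T, μ t * (Real.exp (-(t ⬝ᵥ A.mulVec t)) : ℂ) *
              ∏ j, ((Real.exp (2 * A.mulVec t j) : ℂ) ^ α j)) ∧
      ∀ t ∈ T, μ t * (Real.exp (-(t ⬝ᵥ A.mulVec t)) : ℂ) ≠ 0) ∧
    LinearIndependent ℂ
      (fun (t : Fin n → ℝ) => fun (x : Fin n → ℝ) => (gaussian n A t x : ℂ)) := by
  have hb : ∀ (μ : (Fin n → ℝ) → ℂ) (T : Finset (Fin n → ℝ)) (α : Fin n → ℤ),
      (∑ t ∈ T, μ t * (gaussian n A t (fun j => (α j : ℝ)) : ℂ)) *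
          (Real.exp ((fun j => (α j : ℝ)) ⬝ᵥ A.mulVec (fun j => (α j : ℝ))) : ℂ)
        = ∑ t ∈ T, μ t * (Real.exp (-(t ⬝ᵥ A.mulVec t)) : ℂ) *
            ∏ j, ((Real.exp (2 * A.mulVec t j) : ℂ) ^ α j) := by
    intro μ T α
    rw [Finset.sum_mul]
    refine Finset.sum_congr rfl fun t _ => ?_
    rw [mul_assoc, term_eq hA t α, mul_assoc]
  refine ⟨inj' hA, fun T μ hμ => ⟨hb μ T, fun t ht =>
    mul_ne_zero (hμ t ht) (Complex.ofReal_ne_zero.mpr (Real.exp_ne_zero _))⟩, ?_⟩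
  have hLI : LinearIndependent ℂ (fun t : Fin n → ℝ => ⇑(chi A t)) :=
    (linearIndependent_monoidHom (Multiplicative (Fin n → ℤ)) ℂ).comp (chi A) (chi_inj hA)
  rw [linearIndependent_iff']
  intro s g hsum t hts
  have key : ∀ i ∈ s, g i * (Real.exp (-(i ⬝ᵥ A.mulVec i)) : ℂ) = 0 := by
    apply linearIndependent_iff'.mp hLI s
    funext x
    set α : Fin n → ℤ := Multiplicative.toAdd x with hα
    have h0 : ∑ i ∈ s, g i * (gaussian n A i (fun j => (α j : ℝ)) : ℂ) = 0 := by
      have := congrFun hsum (fun j => (α j : ℝ))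
      simpa using this
    have h1 := hb g s α
    rw [h0, zero_mul] at h1
    have h2 : ∑ i ∈ s, (g i * (Real.exp (-(i ⬝ᵥ A.mulVec i)) : ℂ)) * (chi A i) x = 0 := by
      simp only [chi, MonoidHom.coe_mk, OneHom.coe_mk, ← hα]
      exact h1.symm
    simpa using h2
  rcases mul_eq_zero.mp (key t hts) with h | h
  · exact h
  · exact absurd h (Complex.ofReal_ne_zero.mpr (Real.exp_ne_zero _))
end
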